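/- arXiv:1805.09548 — 7 statements merged into one kernel-verified Lean document; each statement's English description precedes it below -/
import Mathlib

section
/- Let j : ℂ → ℂ be continuous with j(0) = 0, and suppose for every ε > 0 there exist continuous nonnegative functions φ_ε, ψ_ε : ℂ → ℝ such that |j(x+y) - j(x)| ≤ ε·φ_ε(x) + ψ_ε(y) for all x, y ∈ ℂ. Let (gₙ) be measurable ℂ-valued functions with gₙ → 0 almost everywhere, and let f be measurable such that j∘f, φ_ε∘gₙ, ψ_ε∘f are integrable for all ε > 0 and n, and sup over ε > 0 and n of ∫ φ_ε(gₙ) dμ ≤ C < ∞. Then lim_{n→∞} ∫ |j(f + gₙ) - j(f) - j(gₙ)| dμ = 0. -/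
/-!
Put `F n = ‖j (f + gₙ) - (j f + j gₙ)‖`. The hypothesis on `j` gives, for each `ε > 0`,
`F n ≤ ε φ_ε(gₙ) + H_ε` with `H_ε = ψ_ε(f) + ‖j f‖` integrable and independent of `n`. Hence
`F n ≤ (F n - ε φ_ε(gₙ))⁺ + ε φ_ε(gₙ)`, where the positive part is dominated by `|H_ε|` and tends
to `0` a.e. because `F n` does (by continuity of `j` and `j 0 = 0`). Dominated convergence kills
the first term and the second contributes at most `ε C`, so `∫ F n ≤ ε (C + 1)` eventually.
-/

open Filter Topology MeasureTheory

theorem tendsto_zero_of_forall_eventually_le_mul {α : Type*} {l : Filter α} {u : α → ℝ} {K : ℝ}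
    (h0 : ∀ᶠ x in l, 0 ≤ u x) (h : ∀ ε > 0, ∀ᶠ x in l, u x ≤ ε * K) :
    Tendsto u l (𝓝 0) := by
  refine tendsto_order.2 ⟨fun a ha => h0.mono fun x hx => ha.trans_le hx, fun b hb => ?_⟩
  have hK : 0 < |K| + 1 := by positivity
  filter_upwards [h (b / (|K| + 1)) (by positivity)] with x hx
  calc u x ≤ b / (|K| + 1) * K := hx
    _ ≤ b / (|K| + 1) * |K| := by gcongr; exact le_abs_self K
    _ < b / (|K| + 1) * (|K| + 1) := by gcongr; linarith
    _ = b := div_mul_cancel₀ b hK.ne'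

theorem norm_max_sub_zero_le_abs {a b c : ℝ} (h : a ≤ b + c) : ‖max (a - b) 0‖ ≤ |c| := by
  rw [Real.norm_of_nonneg (le_max_right _ _)]
  exact max_le (by linarith [le_abs_self c]) (abs_nonneg c)

section PositivePart

variable {Ω : Type*} [MeasurableSpace Ω] {μ : Measure Ω} {F : ℕ → Ω → ℝ}

theorem integrable_max_sub_zero {f φ H : Ω → ℝ} (hf : AEStronglyMeasurable f μ)
    (hφ : AEStronglyMeasurable φ μ) (hH : Integrable H μ) (hle : ∀ ω, f ω ≤ φ ω + H ω) :
    Integrable (fun ω => max (f ω - φ ω) 0) μ :=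
  hH.abs.mono' ((hf.sub hφ).sup aestronglyMeasurable_const)
    (ae_of_all _ fun ω => norm_max_sub_zero_le_abs (hle ω))

theorem tendsto_integral_max_sub_zero {Φ : ℕ → Ω → ℝ} {H : Ω → ℝ}
    (hF : ∀ n, AEStronglyMeasurable (F n) μ)
    (hΦ : ∀ n, AEStronglyMeasurable (Φ n) μ) (hΦ0 : ∀ n ω, 0 ≤ Φ n ω) (hH : Integrable H μ)
    (hle : ∀ n ω, F n ω ≤ Φ n ω + H ω)
    (hlim : ∀ᵐ ω ∂μ, Tendsto (fun n => F n ω) atTop (𝓝 0)) :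
    Tendsto (fun n => ∫ ω, max (F n ω - Φ n ω) 0 ∂μ) atTop (𝓝 0) := by
  have hW := tendsto_integral_of_dominated_convergence (fun ω => |H ω|)
    (fun n => ((hF n).sub (hΦ n)).sup aestronglyMeasurable_const) hH.abs
    (fun n => ae_of_all _ fun ω => norm_max_sub_zero_le_abs (hle n ω)) (f := fun _ => 0) ?_
  · simpa using hW
  filter_upwards [hlim] with ω hω
  have hmax : Tendsto (fun n => max (F n ω) 0) atTop (𝓝 0) := by
    simpa using hω.max (tendsto_const_nhds (x := (0 : ℝ)))
  exact tendsto_of_tendsto_of_tendsto_of_le_of_le tendsto_const_nhds hmax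
    (fun n => le_max_right _ _) (fun n => max_le_max (sub_le_self _ (hΦ0 n ω)) le_rfl)

theorem tendsto_integral_of_forall_le_mul_add (Φ : ℝ → ℕ → Ω → ℝ) (H : ℝ → Ω → ℝ) {K : ℝ}
    (hF : ∀ n, AEStronglyMeasurable (F n) μ) (hF0 : ∀ n ω, 0 ≤ F n ω)
    (hlim : ∀ᵐ ω ∂μ, Tendsto (fun n => F n ω) atTop (𝓝 0))
    (hΦ : ∀ ε > 0, ∀ n, Integrable (Φ ε n) μ) (hΦ0 : ∀ ε > 0, ∀ n ω, 0 ≤ Φ ε n ω)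
    (hK : ∀ ε > 0, ∀ n, ∫ ω, Φ ε n ω ∂μ ≤ K) (hH : ∀ ε > 0, Integrable (H ε) μ)
    (hle : ∀ ε > 0, ∀ n ω, F n ω ≤ ε * Φ ε n ω + H ε ω) :
    Tendsto (fun n => ∫ ω, F n ω ∂μ) atTop (𝓝 0) := by
  refine tendsto_zero_of_forall_eventually_le_mul (K := K + 1)
    (Eventually.of_forall fun n => integral_nonneg (hF0 n)) fun ε hε => ?_
  have hεΦ n : Integrable (fun ω => ε * Φ ε n ω) μ := (hΦ ε hε n).const_mul ε
  have hW := tendsto_integral_max_sub_zero hF (fun n => (hεΦ n).aestronglyMeasurable)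
    (fun n ω => mul_nonneg hε.le (hΦ0 ε hε n ω)) (hH ε hε) (hle ε hε) hlim
  filter_upwards [hW.eventually (ge_mem_nhds hε)] with n hn
  have hWint : Integrable (fun ω => max (F n ω - ε * Φ ε n ω) 0) μ :=
    integrable_max_sub_zero (hF n) (hεΦ n).aestronglyMeasurable (hH ε hε) (hle ε hε n)
  calc ∫ ω, F n ω ∂μ ≤ ∫ ω, (max (F n ω - ε * Φ ε n ω) 0 + ε * Φ ε n ω) ∂μ :=
        integral_mono_of_nonneg (ae_of_all _ (hF0 n)) (hWint.add (hεΦ n))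
          (ae_of_all _ fun ω => by linarith [le_max_left (F n ω - ε * Φ ε n ω) 0])
    _ = ∫ ω, max (F n ω - ε * Φ ε n ω) 0 ∂μ + ε * ∫ ω, Φ ε n ω ∂μ := by
        rw [integral_add hWint (hεΦ n), integral_const_mul]
    _ ≤ ε + ε * K := by gcongr; exact hK ε hε n
    _ = ε * (K + 1) := by ring

end PositivePart

theorem norm_map_add_sub_le {E G : Type*} [AddCommGroup E] [SeminormedAddCommGroup G]
    (j : E → G) (x y : E) : ‖j (x + y) - (j x + j y)‖ ≤ ‖j (y + x) - j y‖ + ‖j x‖ := by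
  rw [add_comm x y, add_comm (j x), ← sub_sub]
  exact norm_sub_le _ _

theorem brezis_lieb_lemma_general {Ω : Type*} [MeasurableSpace Ω] (μ : Measure Ω)
    (j : ℂ → ℂ) (hjc : Continuous j) (hj0 : j 0 = 0)
    (φ ψ : ℝ → ℂ → ℝ)
    (hφ0 : ∀ ε > (0 : ℝ), ∀ x : ℂ, 0 ≤ φ ε x)
    (hineq : ∀ ε > (0 : ℝ), ∀ x y : ℂ, ‖j (x + y) - j x‖ ≤ ε * φ ε x + ψ ε y)
    (g : ℕ → Ω → ℂ) (f : Ω → ℂ)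
    (hg : ∀ n, Measurable (g n)) (hf : Measurable f)
    (hae : ∀ᵐ ω ∂μ, Tendsto (fun n => g n ω) atTop (𝓝 0))
    (hjf : Integrable (fun ω => j (f ω)) μ)
    (hφg : ∀ ε > (0 : ℝ), ∀ n, Integrable (fun ω => φ ε (g n ω)) μ)
    (hψf : ∀ ε > (0 : ℝ), Integrable (fun ω => ψ ε (f ω)) μ)
    (C : ℝ) (hC : ∀ ε > (0 : ℝ), ∀ n, ∫ ω, φ ε (g n ω) ∂μ ≤ C) :
    Tendsto (fun n => ∫ ω, ‖j (f ω + g n ω) - (j (f ω) + j (g n ω))‖ ∂μ)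
      atTop (𝓝 0) := by
  have hjm := hjc.measurable
  refine tendsto_integral_of_forall_le_mul_add (fun ε n ω => φ ε (g n ω))
    (fun ε ω => ψ ε (f ω) + ‖j (f ω)‖) (fun n => by fun_prop) (fun n ω => norm_nonneg _) ?_
    hφg (fun ε hε n ω => hφ0 ε hε _) hC (fun ε hε => (hψf ε hε).add hjf.norm) ?_
  · filter_upwards [hae] with ω hω
    have hcont : Continuous fun z => ‖j (f ω + z) - (j (f ω) + j z)‖ := by fun_prop
    simpa [hj0, Function.comp_def] using (hcont.tendsto 0).comp hω
  · intro ε hε n ω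
    linarith [norm_map_add_sub_le j (f ω) (g n ω), hineq ε hε (g n ω) (f ω)]

/-- **The classical Brezis–Lieb lemma.** -/
theorem brezis_lieb_lemma {Ω : Type*} [MeasurableSpace Ω] (μ : Measure Ω)
    (j : ℂ → ℂ) (hjc : Continuous j) (hj0 : j 0 = 0)
    (φ ψ : ℝ → ℂ → ℝ)
    (hφc : ∀ ε > (0 : ℝ), Continuous (φ ε)) (hψc : ∀ ε > (0 : ℝ), Continuous (ψ ε))
    (hφ0 : ∀ ε > (0 : ℝ), ∀ x : ℂ, 0 ≤ φ ε x) (hψ0 : ∀ ε > (0 : ℝ), ∀ x : ℂ, 0 ≤ ψ ε x)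
    (hineq : ∀ ε > (0 : ℝ), ∀ x y : ℂ, ‖j (x + y) - j x‖ ≤ ε * φ ε x + ψ ε y)
    (g : ℕ → Ω → ℂ) (f : Ω → ℂ)
    (hg : ∀ n, Measurable (g n)) (hf : Measurable f)
    (hae : ∀ᵐ ω ∂μ, Tendsto (fun n => g n ω) atTop (𝓝 0))
    (hjf : Integrable (fun ω => j (f ω)) μ)
    (hφg : ∀ ε > (0 : ℝ), ∀ n, Integrable (fun ω => φ ε (g n ω)) μ)
    (hψf : ∀ ε > (0 : ℝ), Integrable (fun ω => ψ ε (f ω)) μ)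
    (C : ℝ) (hC : ∀ ε > (0 : ℝ), ∀ n, ∫ ω, φ ε (g n ω) ∂μ ≤ C) :
    Tendsto (fun n => ∫ ω, ‖j (f ω + g n ω) - (j (f ω) + j (g n ω))‖ ∂μ)
      atTop (𝓝 0) :=
  brezis_lieb_lemma_general μ j hjc hj0 φ ψ hφ0 hineq g f hg hf hae hjf hφg hψf C hC
end

section
/- Let 0 < p < ∞, and let (fₙ) be measurable functions with fₙ → f almost everywhere and ∫ |fₙ|^p dμ ≤ C < ∞ for all n. Then f ∈ L^p(μ) and lim_{n→∞} ∫ (|fₙ|^p - |fₙ - f|^p) dμ = ∫ |f|^p dμ. -/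
open Filter Topology MeasureTheory
open scoped ENNReal NNReal

/-!
Fix `ε > 0`. The elementary inequality `(x + y) ^ p ≤ (1 + ε) x ^ p + C_ε y ^ p` gives the
pointwise bound `|‖fₙ‖ ^ p - ‖fₙ - f‖ ^ p - ‖f‖ ^ p| ≤ ε ‖fₙ - f‖ ^ p + (C_ε + 1) ‖f‖ ^ p`.
The part of the left-hand side exceeding `ε ‖fₙ - f‖ ^ p` tends to `0` a.e. and is dominated
by the integrable `(C_ε + 1) ‖f‖ ^ p` (`f ∈ Lᵖ` by Fatou), so its integral tends to `0`; what
remains is at most `ε` times a uniform bound on `∫ ‖fₙ - f‖ ^ p`. Letting `ε → 0` gives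
`‖fₙ‖ ^ p - ‖fₙ - f‖ ^ p → ‖f‖ ^ p` in `L¹`.
-/

namespace Real

theorem add_rpow_le_one_add_rpow_mul_add {p δ x y : ℝ} (hp : 0 ≤ p) (hδ : 0 < δ)
    (hx : 0 ≤ x) (hy : 0 ≤ y) :
    (x + y) ^ p ≤ (1 + δ) ^ p * x ^ p + (1 + δ⁻¹) ^ p * y ^ p := by
  rcases le_total y (δ * x) with h | h
  · calc (x + y) ^ p ≤ ((1 + δ) * x) ^ p := rpow_le_rpow (by positivity) (by linarith) hp
      _ = (1 + δ) ^ p * x ^ p := mul_rpow (by positivity) hx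
      _ ≤ _ := le_add_of_nonneg_right (by positivity)
  · have hxy : x ≤ δ⁻¹ * y := (le_inv_mul_iff₀ hδ).2 h
    calc (x + y) ^ p ≤ ((1 + δ⁻¹) * y) ^ p := rpow_le_rpow (by positivity) (by linarith) hp
      _ = (1 + δ⁻¹) ^ p * y ^ p := mul_rpow (by positivity) hy
      _ ≤ _ := le_add_of_nonneg_left (by positivity)

theorem exists_add_rpow_le_one_add_mul_add {p ε : ℝ} (hp : 0 < p) (hε : 0 < ε) :
    ∃ C, 0 ≤ C ∧
      ∀ x y : ℝ, 0 ≤ x → 0 ≤ y → (x + y) ^ p ≤ (1 + ε) * x ^ p + C * y ^ p := by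
  set δ := (1 + ε) ^ p⁻¹ - 1
  have hδ_pow : (1 + δ) ^ p = 1 + ε := by
    rw [add_sub_cancel, ← rpow_mul (by positivity), inv_mul_cancel₀ hp.ne', rpow_one]
  have hδ : 0 < δ := sub_pos.2 (one_lt_rpow (by linarith) (inv_pos.2 hp))
  refine ⟨(1 + δ⁻¹) ^ p, by positivity, fun x y hx hy => ?_⟩
  simpa only [hδ_pow] using add_rpow_le_one_add_rpow_mul_add hp.le hδ hx hy

end Real

theorem abs_norm_add_rpow_sub_norm_rpow_sub_norm_rpow_le {E : Type*}
    [SeminormedAddCommGroup E] {p ε C : ℝ} (hp : 0 ≤ p) (hε : 0 ≤ ε)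
    (hC : ∀ x y : ℝ, 0 ≤ x → 0 ≤ y → (x + y) ^ p ≤ (1 + ε) * x ^ p + C * y ^ p) (a b : E) :
    |‖a + b‖ ^ p - ‖a‖ ^ p - ‖b‖ ^ p| ≤ ε * ‖a‖ ^ p + (C + 1) * ‖b‖ ^ p := by
  have h_le : ‖a + b‖ ^ p ≤ (1 + ε) * ‖a‖ ^ p + C * ‖b‖ ^ p :=
    (Real.rpow_le_rpow (norm_nonneg _) (norm_add_le a b) hp).trans
      (hC _ _ (norm_nonneg a) (norm_nonneg b))
  have h_ge : ‖a‖ ^ p - ‖a + b‖ ^ p ≤ ε * ‖a‖ ^ p + C * ‖b‖ ^ p := by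
    rcases le_total ‖a‖ ‖a + b‖ with h | h
    · linarith [Real.rpow_le_rpow (norm_nonneg _) h hp]
    · have h_a : ‖a‖ ^ p ≤ (1 + ε) * ‖a + b‖ ^ p + C * ‖b‖ ^ p :=
        (Real.rpow_le_rpow (norm_nonneg _) (norm_le_add_norm_add a b) hp).trans
          (hC _ _ (norm_nonneg _) (norm_nonneg b))
      nlinarith [mul_le_mul_of_nonneg_left (Real.rpow_le_rpow (norm_nonneg _) h hp) hε]
  have hb : 0 ≤ ‖b‖ ^ p := by positivity
  rw [abs_le]
  constructor <;> linarith

theorem enorm_norm_add_rpow_sub_norm_rpow_sub_norm_rpow_le {E : Type*}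
    [SeminormedAddCommGroup E] {p C : ℝ} {ε : ℝ≥0} (hp : 0 ≤ p) (hC₀ : 0 ≤ C)
    (hC : ∀ x y : ℝ, 0 ≤ x → 0 ≤ y → (x + y) ^ p ≤ (1 + ε) * x ^ p + C * y ^ p) (a b : E) :
    ‖‖a + b‖ ^ p - ‖a‖ ^ p - ‖b‖ ^ p‖ₑ ≤
      ε * ‖a‖ₑ ^ p + ENNReal.ofReal (C + 1) * ‖b‖ₑ ^ p := by
  have h := abs_norm_add_rpow_sub_norm_rpow_sub_norm_rpow_le hp ε.coe_nonneg hC a b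
  rw [← ofReal_norm, Real.norm_eq_abs]
  refine (ENNReal.ofReal_le_ofReal h).trans_eq ?_
  rw [ENNReal.ofReal_add (by positivity) (mul_nonneg (by linarith) (by positivity)),
    ENNReal.ofReal_mul ε.coe_nonneg, ENNReal.ofReal_mul (by linarith),
    ← ENNReal.ofReal_rpow_of_nonneg (norm_nonneg _) hp,
    ← ENNReal.ofReal_rpow_of_nonneg (norm_nonneg _) hp, ofReal_norm, ofReal_norm]
  simp

section Measure

variable {Ω E : Type*} [MeasurableSpace Ω] {μ : Measure Ω} [NormedAddCommGroup E]

theorem lintegral_le_of_tendsto_ae {u : ℕ → Ω → ℝ≥0∞} {u₀ : Ω → ℝ≥0∞} {c : ℝ≥0∞}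
    (hu : ∀ n, AEMeasurable (u n) μ)
    (hlim : ∀ᵐ ω ∂μ, Tendsto (fun n => u n ω) atTop (𝓝 (u₀ ω)))
    (hc : ∀ n, ∫⁻ ω, u n ω ∂μ ≤ c) :
    ∫⁻ ω, u₀ ω ∂μ ≤ c :=
  calc ∫⁻ ω, u₀ ω ∂μ = ∫⁻ ω, liminf (fun n => u n ω) atTop ∂μ :=
        lintegral_congr_ae (hlim.mono fun _ h => h.liminf_eq.symm)
    _ ≤ liminf (fun n => ∫⁻ ω, u n ω ∂μ) atTop := lintegral_liminf_le' hu
    _ ≤ c := liminf_le_of_frequently_le' (Frequently.of_forall hc)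

theorem memLp_ofReal_of_lintegral_enorm_rpow_ne_top {g : Ω → E} {p : ℝ} (hp : 0 < p)
    (hg : AEStronglyMeasurable g μ)
    (hint : ∫⁻ ω, ‖g ω‖ₑ ^ p ∂μ ≠ ∞) : MemLp g (ENNReal.ofReal p) μ := by
  refine ⟨hg, (eLpNorm_lt_top_iff_lintegral_rpow_enorm_lt_top (by simpa)
    ENNReal.ofReal_ne_top).2 ?_⟩
  rwa [ENNReal.toReal_ofReal hp.le, lt_top_iff_ne_top]

theorem integrable_norm_rpow_of_lintegral_enorm_rpow_ne_top {g : Ω → E} {p : ℝ} (hp : 0 < p)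
    (hg : AEStronglyMeasurable g μ)
    (hint : ∫⁻ ω, ‖g ω‖ₑ ^ p ∂μ ≠ ∞) : Integrable (fun ω => ‖g ω‖ ^ p) μ := by
  have hmem := memLp_ofReal_of_lintegral_enorm_rpow_ne_top hp hg hint
  simpa [hp.le] using hmem.integrable_norm_rpow (by simpa) ENNReal.ofReal_ne_top

theorem lintegral_enorm_sub_rpow_le {g h : Ω → E} {p : ℝ} (hp : 0 ≤ p)
    (hg : AEStronglyMeasurable g μ) :
    ∫⁻ ω, ‖g ω - h ω‖ₑ ^ p ∂μ ≤ 2 ^ p * (∫⁻ ω, ‖g ω‖ₑ ^ p ∂μ + ∫⁻ ω, ‖h ω‖ₑ ^ p ∂μ) :=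
  calc ∫⁻ ω, ‖g ω - h ω‖ₑ ^ p ∂μ ≤ ∫⁻ ω, 2 ^ p * (‖g ω‖ₑ ^ p + ‖h ω‖ₑ ^ p) ∂μ :=
        lintegral_mono fun ω => (ENNReal.rpow_le_rpow enorm_sub_le hp).trans
          (ENNReal.add_rpow_le_two_rpow_mul_rpow_add_rpow _ _ hp)
    _ = 2 ^ p * (∫⁻ ω, ‖g ω‖ₑ ^ p ∂μ + ∫⁻ ω, ‖h ω‖ₑ ^ p ∂μ) := by
        rw [lintegral_const_mul' _ _ (by simp), lintegral_add_left' (hg.enorm.pow_const p)]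

theorem tendsto_lintegral_zero_of_le_mul_add {u v : ℕ → Ω → ℝ≥0∞} {M : ℝ≥0∞} (hM : M ≠ ∞)
    (hu : ∀ n, AEMeasurable (u n) μ) (hv : ∀ n, AEMeasurable (v n) μ)
    (hu_lim : ∀ᵐ ω ∂μ, Tendsto (fun n => u n ω) atTop (𝓝 0))
    (hv_le : ∀ n, ∫⁻ ω, v n ω ∂μ ≤ M)
    (hdom : ∀ ε : ℝ≥0, 0 < ε →
      ∃ G : Ω → ℝ≥0∞, ∫⁻ ω, G ω ∂μ ≠ ∞ ∧ ∀ n ω, u n ω ≤ ε * v n ω + G ω) :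
    Tendsto (fun n => ∫⁻ ω, u n ω ∂μ) atTop (𝓝 0) := by
  have hlimsup (ε : ℝ≥0) (hε : 0 < ε) : limsup (fun n => ∫⁻ ω, u n ω ∂μ) atTop ≤ ε * M := by
    obtain ⟨G, hG, hle⟩ := hdom ε hε
    have hexcess : Tendsto (fun n => ∫⁻ ω, u n ω - ε * v n ω ∂μ) atTop (𝓝 0) := by
      simpa using tendsto_lintegral_of_dominated_convergence' G
        (fun n => (hu n).sub ((hv n).const_mul _))
        (fun n => ae_of_all _ fun ω => tsub_le_iff_left.2 (hle n ω)) hG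
        (hu_lim.mono fun ω h => tendsto_of_tendsto_of_tendsto_of_le_of_le tendsto_const_nhds h
          (fun _ => zero_le) (fun _ => tsub_le_self))
    calc limsup (fun n => ∫⁻ ω, u n ω ∂μ) atTop
        ≤ limsup (fun n => ∫⁻ ω, u n ω - ε * v n ω ∂μ + ε * M) atTop := by
          refine limsup_le_limsup (Eventually.of_forall fun n => ?_)
          calc ∫⁻ ω, u n ω ∂μ ≤ ∫⁻ ω, (u n ω - ε * v n ω) + ε * v n ω ∂μ :=
                lintegral_mono fun ω => le_tsub_add
            _ = ∫⁻ ω, u n ω - ε * v n ω ∂μ + ε * ∫⁻ ω, v n ω ∂μ := by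
                rw [lintegral_add_right' _ ((hv n).const_mul _),
                  lintegral_const_mul' _ _ ENNReal.coe_ne_top]
            _ ≤ ∫⁻ ω, u n ω - ε * v n ω ∂μ + ε * M := by gcongr; exact hv_le n
      _ = ε * M := by simpa using (hexcess.add_const (ε * M)).limsup_eq
  refine tendsto_of_le_liminf_of_limsup_le zero_le ?_
  by_contra! hpos
  obtain ⟨ε, hε, hlt⟩ := ENNReal.exists_nnreal_pos_mul_lt hM hpos.ne'
  exact (hlimsup ε hε).not_gt hlt

theorem tendsto_lintegral_enorm_norm_rpow_sub_norm_sub_rpow_sub_norm_rpow {p : ℝ}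
    {f : ℕ → Ω → E} {f₀ : Ω → E} {M : ℝ≥0∞} (hp : 0 < p)
    (hf : ∀ n, AEStronglyMeasurable (f n) μ) (hf₀ : AEStronglyMeasurable f₀ μ)
    (hae : ∀ᵐ ω ∂μ, Tendsto (fun n => f n ω) atTop (𝓝 (f₀ ω)))
    (hf₀_fin : ∫⁻ ω, ‖f₀ ω‖ₑ ^ p ∂μ ≠ ∞) (hM : M ≠ ∞)
    (hdiff : ∀ n, ∫⁻ ω, ‖f n ω - f₀ ω‖ₑ ^ p ∂μ ≤ M) :
    Tendsto (fun n => ∫⁻ ω, ‖‖f n ω‖ ^ p - ‖f n ω - f₀ ω‖ ^ p - ‖f₀ ω‖ ^ p‖ₑ ∂μ)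
      atTop (𝓝 0) := by
  refine tendsto_lintegral_zero_of_le_mul_add hM (fun n => by fun_prop (disch := exact hp.le))
    (fun n => by fun_prop) (hae.mono fun ω h => ?_) hdiff fun ε hε => ?_
  · have h₁ : Tendsto (fun n => ‖f n ω‖ ^ p) atTop (𝓝 (‖f₀ ω‖ ^ p)) :=
      h.norm.rpow_const (Or.inr hp.le)
    have h₂ : Tendsto (fun n => ‖f n ω - f₀ ω‖ ^ p) atTop (𝓝 0) := by
      simpa [Real.zero_rpow hp.ne'] using (h.sub_const (f₀ ω)).norm.rpow_const (Or.inr hp.le)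
    simpa using ((h₁.sub h₂).sub_const (‖f₀ ω‖ ^ p)).enorm
  obtain ⟨K, hK₀, hK⟩ := Real.exists_add_rpow_le_one_add_mul_add hp (NNReal.coe_pos.2 hε)
  refine ⟨fun ω => ENNReal.ofReal (K + 1) * ‖f₀ ω‖ₑ ^ p, ?_, fun n ω => ?_⟩
  · rw [lintegral_const_mul' _ _ ENNReal.ofReal_ne_top]
    exact ENNReal.mul_ne_top ENNReal.ofReal_ne_top hf₀_fin
  · simpa using
      enorm_norm_add_rpow_sub_norm_rpow_sub_norm_rpow_le hp.le hK₀ hK (f n ω - f₀ ω) (f₀ ω)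

end Measure

/-- **The Brezis–Lieb lemma for `ℒᵖ`, `0 < p < ∞`.** -/
theorem brezis_lieb_Lp {Ω : Type*} [MeasurableSpace Ω] (μ : Measure Ω)
    (p : ℝ) (hp : 0 < p)
    (f : ℕ → Ω → ℂ) (f₀ : Ω → ℂ)
    (hf : ∀ n, Measurable (f n)) (hf₀ : Measurable f₀)
    (hae : ∀ᵐ ω ∂μ, Tendsto (fun n => f n ω) atTop (𝓝 (f₀ ω)))
    (C : ℝ)
    (hC : ∀ n, ∫⁻ ω, (‖f n ω‖₊ : ENNReal) ^ p ∂μ ≤ ENNReal.ofReal C) :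
    MemLp f₀ (ENNReal.ofReal p) μ ∧
      Tendsto
        (fun n => ∫ ω, (‖f n ω‖ ^ p - ‖f n ω - f₀ ω‖ ^ p) ∂μ)
        atTop (𝓝 (∫ ω, ‖f₀ ω‖ ^ p ∂μ)) := by
  simp only [← enorm_eq_nnnorm] at hC
  have hf₀_le : ∫⁻ ω, ‖f₀ ω‖ₑ ^ p ∂μ ≤ ENNReal.ofReal C :=
    lintegral_le_of_tendsto_ae (fun n => ((hf n).enorm.pow_const p).aemeasurable)
      (hae.mono fun ω h => (ENNReal.continuous_rpow_const.tendsto _).comp h.enorm) hC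
  have hf₀_fin := ne_top_of_le_ne_top ENNReal.ofReal_ne_top hf₀_le
  set M := 2 ^ p * (ENNReal.ofReal C + ENNReal.ofReal C)
  have hM : M ≠ ∞ := by finiteness
  have hdiff (n : ℕ) : ∫⁻ ω, ‖f n ω - f₀ ω‖ₑ ^ p ∂μ ≤ M :=
    (lintegral_enorm_sub_rpow_le hp.le (hf n).aestronglyMeasurable).trans
      (mul_le_mul_right (add_le_add (hC n) hf₀_le) _)
  have hint (n : ℕ) : Integrable (fun ω => ‖f n ω‖ ^ p - ‖f n ω - f₀ ω‖ ^ p) μ :=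
    (integrable_norm_rpow_of_lintegral_enorm_rpow_ne_top hp (hf n).aestronglyMeasurable
      (ne_top_of_le_ne_top ENNReal.ofReal_ne_top (hC n))).sub
    (integrable_norm_rpow_of_lintegral_enorm_rpow_ne_top hp
      ((hf n).sub hf₀).aestronglyMeasurable (ne_top_of_le_ne_top hM (hdiff n)))
  exact ⟨memLp_ofReal_of_lintegral_enorm_rpow_ne_top hp hf₀.aestronglyMeasurable hf₀_fin,
    tendsto_integral_of_L1 _ (hf₀.norm.pow_const p).aestronglyMeasurable
      (Eventually.of_forall hint) (tendsto_lintegral_enorm_norm_rpow_sub_norm_sub_rpow_sub_norm_rpow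
      hp (fun n => (hf n).aestronglyMeasurable) hf₀.aestronglyMeasurable hae hf₀_fin hM hdiff)⟩
end

section
/- The Banach lattice c₀ of real sequences converging to zero is not a σ-Brezis–Lieb space: there exist a sequence (xₙ) and an element x in c₀ with ‖xₙ‖ = ‖x‖ = 1 for all n, xₙ uo-converges to x, but ‖xₙ - x‖ = 1 for all n. Concretely, one may take xₙ = e_{2n} + Σ_{k=1}^{n} (1/k)·e_k and x = Σ_{k=1}^{∞} (1/k)·e_k, where e_k are the standard unit vectors. -/
open Filter Topology MeasureTheory
open scoped ZeroAtInfty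

/-- Order convergence of a net (indexed by a preordered type) in a lattice-ordered group:
there is a net decreasing to `0` eventually dominating `|x α - x₀|`. -/
def OrderConvNet {E : Type*} [Lattice E] [AddCommGroup E] {ι : Type*} [Preorder ι]
    (x : ι → E) (x₀ : E) : Prop :=
  ∃ z : ι → E, Antitone z ∧ IsGLB (Set.range z) 0 ∧ ∀ᶠ α in atTop, |x α - x₀| ≤ z α

/-- Unbounded order convergence of a net. -/
def UOConvNet {E : Type*} [Lattice E] [AddCommGroup E] {ι : Type*} [Preorder ι]
    (x : ι → E) (x₀ : E) : Prop :=
  ∀ u : E, 0 ≤ u → OrderConvNet (fun α => |x α - x₀| ⊓ u) 0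

/-- A normed lattice is a Brezis–Lieb space if `uo`-convergence together with convergence
of norms implies norm convergence, for all nets. -/
def IsBLSpace (E : Type*) [NormedAddCommGroup E] [Lattice E] : Prop :=
  ∀ (ι : Type) [Preorder ι] [IsDirected ι (· ≤ ·)] [Nonempty ι],
    ∀ (x : ι → E) (x₀ : E), UOConvNet x x₀ →
      Tendsto (fun α => ‖x α‖) atTop (𝓝 ‖x₀‖) →
      Tendsto (fun α => ‖x α - x₀‖) atTop (𝓝 0)

/-- σ-Brezis–Lieb space: the same for sequences. -/
def IsSigmaBLSpace (E : Type*) [NormedAddCommGroup E] [Lattice E] : Prop :=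
  ∀ (x : ℕ → E) (x₀ : E), UOConvNet x x₀ →
    Tendsto (fun n => ‖x n‖) atTop (𝓝 ‖x₀‖) →
    Tendsto (fun n => ‖x n - x₀‖) atTop (𝓝 0)

/-- The Brezis–Lieb property of a normed lattice. -/
def HasBLProperty (E : Type*) [NormedAddCommGroup E] [Lattice E] : Prop :=
  ∀ (u : ℕ → E) (u₀ : E), (∀ n, 0 ≤ u n) → (∀ n, ‖u n‖ = 1) →
    (Pairwise fun n m => u n ⊓ u m = 0) → 0 < u₀ →
    ‖u₀‖ < limsup (fun n => ‖u₀ + u n‖) atTop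

/-- The norm is order continuous: every net decreasing to `0` converges to `0` in norm. -/
def HasOrderContinuousNorm (E : Type*) [NormedAddCommGroup E] [Lattice E] : Prop :=
  ∀ (ι : Type) [Preorder ι] [IsDirected ι (· ≤ ·)] [Nonempty ι],
    ∀ x : ι → E, Antitone x → IsGLB (Set.range x) 0 →
      Tendsto (fun α => ‖x α‖) atTop (𝓝 0)

/-- σ-Dedekind completeness: every order bounded sequence has a supremum. -/
def SigmaDedekindComplete (E : Type*) [Lattice E] : Prop :=
  ∀ (f : ℕ → E) (b : E), (∀ n, f n ≤ b) → ∃ s, IsLUB (Set.range f) s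

open ZeroAtInftyContinuousMap in
noncomputable instance : Max C₀(ℕ, ℝ) :=
  ⟨fun f g =>
    { toFun := fun n => f n ⊔ g n
      continuous_toFun := continuous_of_discreteTopology
      zero_at_infty' := by simpa using (zero_at_infty f).max (zero_at_infty g) }⟩

open ZeroAtInftyContinuousMap in
noncomputable instance : Min C₀(ℕ, ℝ) :=
  ⟨fun f g =>
    { toFun := fun n => f n ⊓ g n
      continuous_toFun := continuous_of_discreteTopology
      zero_at_infty' := by simpa using (zero_at_infty f).min (zero_at_infty g) }⟩

/-- The pointwise lattice structure on `c₀ = C₀(ℕ, ℝ)`. -/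
noncomputable instance : Lattice C₀(ℕ, ℝ) :=
  letI : LE C₀(ℕ, ℝ) := ⟨fun f g => ⇑f ≤ ⇑g⟩
  letI : LT C₀(ℕ, ℝ) := ⟨fun f g => ⇑f < ⇑g⟩
  DFunLike.coe_injective.lattice _ Iff.rfl Iff.rfl (fun _ _ => rfl) (fun _ _ => rfl)

/-! A sequence in `c₀` converging coordinatewise uo-converges: the tail suprema of
`|xₙ - x₀| ⊓ u` are squeezed between `0` and `u`, so they lie in `c₀`, and they decrease
coordinatewise to `0`. Hence the bump `e_{n+1}` escaping to infinity uo-converges to `0` without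
losing sup norm, and `xₙ = e₀ + e_{n+1}`, `x₀ = e₀` have `‖xₙ‖ = ‖x₀‖ = ‖xₙ - x₀‖ = 1`. -/

open ZeroAtInftyContinuousMap

section TailSup

variable {ι : Type*} [Preorder ι]

noncomputable def tailSup (f : ι → ℝ) (α : ι) : ℝ :=
  ⨆ β : Set.Ici α, f β

lemma le_tailSup {f : ι → ℝ} (hf : BddAbove (Set.range f)) {α β : ι} (h : α ≤ β) :
    f β ≤ tailSup f α :=
  le_ciSup_of_le (hf.mono (Set.range_comp_subset_range Subtype.val f)) ⟨β, h⟩ le_rfl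

lemma tailSup_le {f : ι → ℝ} {α : ι} {c : ℝ} (h : ∀ β, α ≤ β → f β ≤ c) : tailSup f α ≤ c :=
  haveI : Nonempty (Set.Ici α) := ⟨⟨α, le_rfl⟩⟩
  ciSup_le fun β => h β β.2

lemma antitone_tailSup {f : ι → ℝ} (hf : BddAbove (Set.range f)) : Antitone (tailSup f) :=
  fun _ _ hαα' => tailSup_le fun _ hβ => le_tailSup hf (hαα'.trans hβ)

lemma exists_tailSup_le_of_tendsto [IsDirected ι (· ≤ ·)] [Nonempty ι] {f : ι → ℝ} {a c : ℝ}
    (hf : Tendsto f atTop (𝓝 a)) (hac : a < c) : ∃ α, tailSup f α ≤ c := by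
  obtain ⟨α, hα⟩ := eventually_atTop.mp (hf.eventually_lt_const hac)
  exact ⟨α, tailSup_le fun β hβ => (hα β hβ).le⟩

end TailSup

theorem uoConvNet_of_tendsto_apply {ι : Type*} [Preorder ι] [IsDirected ι (· ≤ ·)] [Nonempty ι]
    {x : ι → C₀(ℕ, ℝ)} {x₀ : C₀(ℕ, ℝ)} (hx : ∀ k, Tendsto (fun α => x α k) atTop (𝓝 (x₀ k))) :
    UOConvNet x x₀ := by
  intro u hu
  have hu' : ∀ k, 0 ≤ u k := hu
  let w : ℕ → ι → ℝ := fun k α => |x α k - x₀ k| ⊓ u k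
  have hw_nonneg : ∀ k α, 0 ≤ w k α := fun k α => le_inf (abs_nonneg _) (hu' k)
  have hw_le : ∀ k α, w k α ≤ u k := fun k α => inf_le_right
  have hw_bdd : ∀ k, BddAbove (Set.range (w k)) := fun k =>
    ⟨u k, Set.forall_mem_range.mpr (hw_le k)⟩
  have hw_tendsto : ∀ k, Tendsto (w k) atTop (𝓝 0) := fun k => by
    have := ((hx k).sub_const (x₀ k)).abs.min (tendsto_const_nhds (x := u k))
    rwa [sub_self, abs_zero, min_eq_left (hu' k)] at this
  have hz_nonneg : ∀ k α, 0 ≤ tailSup (w k) α := fun k α =>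
    (hw_nonneg k α).trans (le_tailSup (hw_bdd k) le_rfl)
  let z : ι → C₀(ℕ, ℝ) := fun α =>
    { toFun := fun k => tailSup (w k) α
      continuous_toFun := continuous_of_discreteTopology
      zero_at_infty' := squeeze_zero (fun k => hz_nonneg k α)
        (fun k => tailSup_le fun β _ => hw_le k β) (zero_at_infty u) }
  refine ⟨z, fun α β hαβ k => antitone_tailSup (hw_bdd k) hαβ, ⟨?_, ?_⟩, ?_⟩
  · rintro _ ⟨α, rfl⟩ k
    exact hz_nonneg k α
  · intro b hb k
    refine le_of_forall_gt_imp_ge_of_dense fun c hc => ?_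
    obtain ⟨α, hα⟩ := exists_tailSup_le_of_tendsto (hw_tendsto k) hc
    exact (hb ⟨α, rfl⟩ k).trans hα
  · refine Eventually.of_forall fun α k => ?_
    change |w k α - 0| ≤ tailSup (w k) α
    rw [sub_zero, abs_of_nonneg (hw_nonneg k α)]
    exact le_tailSup (hw_bdd k) le_rfl

theorem ZeroAtInftyContinuousMap.norm_eq_norm_apply_of_forall_le {α β : Type*}
    [TopologicalSpace α] [SeminormedAddCommGroup β] {f : C₀(α, β)} {a : α}
    (h : ∀ x, ‖f x‖ ≤ ‖f a‖) : ‖f‖ = ‖f a‖ := by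
  rw [← norm_toBCF_eq_norm]
  exact le_antisymm ((BoundedContinuousFunction.norm_le (norm_nonneg _)).mpr h)
    (f.toBCF.norm_coe_le_norm a)

section FinsetIndicator

variable {α : Type*} [TopologicalSpace α] [DiscreteTopology α]

noncomputable def finsetIndicator (s : Finset α) : C₀(α, ℝ) where
  toFun := Set.indicator s 1
  continuous_toFun := continuous_of_discreteTopology
  zero_at_infty' := by
    rw [cocompact_eq_cofinite]
    exact tendsto_nhds_of_eventually_eq
      (s.eventually_cofinite_notMem.mono fun _ hk => Set.indicator_of_notMem hk _)

lemma finsetIndicator_apply (s : Finset α) (k : α) :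
    finsetIndicator s k = Set.indicator s 1 k := rfl

lemma finsetIndicator_union [DecidableEq α] {s t : Finset α} (h : Disjoint s t) :
    finsetIndicator (s ∪ t) = finsetIndicator s + finsetIndicator t := by
  ext k
  simp only [finsetIndicator_apply, Finset.coe_union,
    Set.indicator_union_of_disjoint (Finset.disjoint_coe.mpr h), ZeroAtInftyContinuousMap.add_apply]

lemma norm_finsetIndicator {s : Finset α} (hs : s.Nonempty) : ‖finsetIndicator s‖ = 1 := by
  obtain ⟨a, ha⟩ := hs
  have ha' : ‖finsetIndicator s a‖ = 1 := by simp [finsetIndicator_apply, ha]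
  refine (norm_eq_norm_apply_of_forall_le fun k => ?_).trans ha'
  rw [ha', finsetIndicator_apply]
  by_cases hk : k ∈ s <;> simp [hk]

end FinsetIndicator

lemma tendsto_finsetIndicator_singleton_apply (k : ℕ) :
    Tendsto (fun n => finsetIndicator {n} k) atTop (𝓝 0) :=
  tendsto_atTop_of_eventually_const (i₀ := k + 1) fun n hn => by
    simp [finsetIndicator_apply, show k ≠ n by omega]

theorem not_isSigmaBLSpace_of_uoConvNet {E : Type*} [NormedAddCommGroup E] [Lattice E]
    {x : ℕ → E} {x₀ : E} {c : ℝ} (huo : UOConvNet x x₀) (hx : ∀ n, ‖x n‖ = ‖x₀‖)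
    (hc : c ≠ 0) (hd : ∀ n, ‖x n - x₀‖ = c) : ¬ IsSigmaBLSpace E := fun hE => by
  have := hE x x₀ huo (by simp only [hx, tendsto_const_nhds])
  simp only [hd] at this
  exact hc (tendsto_nhds_unique tendsto_const_nhds this)

/-- The Banach lattice `c₀` (here `C₀(ℕ, ℝ)`) is not a σ-Brezis–Lieb space: there are
a sequence `(xₙ)` and an element `x₀` in `c₀`, all of norm one, with `xₙ` uo-convergent
to `x₀` but `‖xₙ - x₀‖ = 1` for all `n`. -/
theorem c0_not_sigmaBLSpace :
    ¬ IsSigmaBLSpace C₀(ℕ, ℝ) ∧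
      ∃ (x : ℕ → C₀(ℕ, ℝ)) (x₀ : C₀(ℕ, ℝ)),
        (∀ n, ‖x n‖ = 1) ∧ ‖x₀‖ = 1 ∧ UOConvNet x x₀ ∧ ∀ n, ‖x n - x₀‖ = 1 := by
  have hx₀ : ‖finsetIndicator {0}‖ = 1 := norm_finsetIndicator (by simp)
  have hx : ∀ n, ‖finsetIndicator {0} + finsetIndicator {n + 1}‖ = 1 := fun n => by
    rw [← finsetIndicator_union (by simp), norm_finsetIndicator (by simp)]
  have hd : ∀ n, ‖finsetIndicator {0} + finsetIndicator {n + 1} - finsetIndicator {0}‖ = 1 :=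
    fun n => by rw [add_sub_cancel_left, norm_finsetIndicator (by simp)]
  have huo : UOConvNet (fun n => finsetIndicator {0} + finsetIndicator {n + 1})
      (finsetIndicator {0}) := uoConvNet_of_tendsto_apply fun k => by
    simpa using tendsto_const_nhds.add
      ((tendsto_finsetIndicator_singleton_apply k).comp (tendsto_add_atTop_nat 1))
  exact ⟨not_isSigmaBLSpace_of_uoConvNet huo (fun n => (hx n).trans hx₀.symm) one_ne_zero hd,
    _, _, hx, hx₀, huo, hd⟩
end

section
/- Let E be an infinite-dimensional Banach lattice with the Brezis–Lieb property. Then E₁ = ℝ ⊕_∞ E (with norm ‖(t, y)‖ = max(|t|, ‖y‖)) does not have the Brezis–Lieb property: taking any disjoint normalized sequence (yₙ) in E₊, u₀ = (1, 0) and uₙ = (0, yₙ) gives a disjoint normalized sequence in (E₁)₊ with limsup ‖u₀ + uₙ‖ = 1 = ‖u₀‖. -/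
open Filter Topology MeasureTheory

/-!
In the sup-norm product, `u₀ = (1, 0)` and `uₙ = (0, yₙ)` live in different coordinates, so
`‖u₀ + uₙ‖ = max 1 ‖yₙ‖ = 1 = ‖u₀‖` and the Brezis–Lieb inequality fails as soon as `E` carries a
disjoint normalized positive sequence `(yₙ)`.

Such a sequence exists in every infinite-dimensional normed lattice `E`. If it did not, repeatedly
splitting a positive element into two disjoint positive pieces would stop, so every `x > 0` lies
above some `a > 0` that cannot be split; the order interval `[0, a]` of such an `a` is then the
segment `[0, 1] • a`. A maximal disjoint family of unsplittable elements is finite, and every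
`z ≥ 0` is the sum of its components along that family, so the family spans `E`.
-/

section LatticeWithZero

def HasPosDisjointSeq (α : Type*) [Lattice α] [Zero α] : Prop :=
  ∃ y : ℕ → α, (∀ n, 0 < y n) ∧ Pairwise fun n m => y n ⊓ y m = 0

variable {α : Type*} [Lattice α] [Zero α]

def Splittable (a : α) : Prop :=
  ∃ p q : α, 0 < p ∧ 0 < q ∧ p ⊓ q = 0 ∧ p ≤ a ∧ q ≤ a

lemma inf_eq_zero_of_le_of_le {a b a' b' : α} (ha' : 0 ≤ a') (hb' : 0 ≤ b') (haa : a' ≤ a)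
    (hbb : b' ≤ b) (hab : a ⊓ b = 0) : a' ⊓ b' = 0 :=
  le_antisymm (hab ▸ inf_le_inf haa hbb) (le_inf ha' hb')

/-- Split `x` repeatedly, keeping one half and emitting the other. -/
lemma hasPosDisjointSeq_of_forall_splittable {x : α} (hx : 0 < x)
    (h : ∀ a, 0 < a → a ≤ x → Splittable a) : HasPosDisjointSeq α := by
  choose! p q hp hq hpq hpa hqa using h
  let g : ℕ → α := fun n => p^[n] x
  have hg_succ : ∀ n, g (n + 1) = p (g n) := fun n => Function.iterate_succ_apply' p n x
  have hg : ∀ n, 0 < g n ∧ g n ≤ x := by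
    intro n
    induction n with
    | zero => exact ⟨hx, le_rfl⟩
    | succ n ih => rw [hg_succ]; exact ⟨hp _ ih.1 ih.2, (hpa _ ih.1 ih.2).trans ih.2⟩
  have hg_anti : Antitone g :=
    antitone_nat_of_succ_le fun n => hg_succ n ▸ hpa _ (hg n).1 (hg n).2
  have hdisj : ∀ n m, n < m → q (g m) ⊓ q (g n) = 0 := fun n m hnm =>
    inf_eq_zero_of_le_of_le (hq _ (hg m).1 (hg m).2).le (hq _ (hg n).1 (hg n).2).le
      ((hqa _ (hg m).1 (hg m).2).trans (hg_succ n ▸ hg_anti hnm)) le_rfl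
      (hpq _ (hg n).1 (hg n).2)
  refine ⟨fun n => q (g n), fun n => hq _ (hg n).1 (hg n).2, fun n m hnm => ?_⟩
  rcases hnm.lt_or_gt with h | h
  · rw [inf_comm]; exact hdisj n m h
  · exact hdisj m n h

lemma exists_finite_maximal_unsplittable (H : ¬ HasPosDisjointSeq α) :
    ∃ M : Set α, M.Finite ∧ (∀ a ∈ M, 0 < a ∧ ¬ Splittable a) ∧
      M.Pairwise (fun a b => a ⊓ b = 0) ∧ ∀ x, 0 < x → ∃ a ∈ M, x ⊓ a ≠ 0 := by
  let S : Set (Set α) :=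
    {M | (∀ a ∈ M, 0 < a ∧ ¬ Splittable a) ∧ M.Pairwise (fun a b => a ⊓ b = 0)}
  obtain ⟨M, ⟨hMS, hMd⟩, hMmax⟩ := zorn_subset S fun c hcS hc =>
    ⟨⋃₀ c, ⟨fun a ⟨s, hs, has⟩ => (hcS hs).1 a has,
      hc.pairwise_sUnion.2 fun s hs => (hcS hs).2⟩, fun s hs => Set.subset_sUnion_of_mem hs⟩
  refine ⟨M, Set.not_infinite.1 fun hinf => H ?_, hMS, hMd, fun x hx => ?_⟩
  · refine ⟨fun n => hinf.natEmbedding _ n, fun n => (hMS _ (hinf.natEmbedding _ n).2).1,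
      fun n m hnm => hMd (hinf.natEmbedding _ n).2 (hinf.natEmbedding _ m).2 ?_⟩
    exact fun h => hnm ((hinf.natEmbedding _).injective (Subtype.ext h))
  · by_contra! hxM
    obtain ⟨b, hb, hbx, hbns⟩ : ∃ b, 0 < b ∧ b ≤ x ∧ ¬ Splittable b := by
      by_contra! hsplit
      exact H (hasPosDisjointSeq_of_forall_splittable hx hsplit)
    have hbM : ∀ a ∈ M, b ⊓ a = 0 := fun a ha =>
      inf_eq_zero_of_le_of_le hb.le (hMS a ha).1.le hbx le_rfl (hxM a ha)
    have hins : insert b M ∈ S := by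
      refine ⟨Set.forall_mem_insert.2 ⟨⟨hb, hbns⟩, hMS⟩, hMd.insert fun a ha _ => ?_⟩
      exact ⟨hbM a ha, inf_comm a b ▸ hbM a ha⟩
    have : b ⊓ b = 0 := hbM b (hMmax hins (Set.subset_insert b M) (Set.mem_insert b M))
    exact hb.ne' (inf_idem b ▸ this)

end LatticeWithZero

section LatticeOrderedGroup

variable {α : Type*} [AddCommGroup α] [Lattice α] [IsOrderedAddMonoid α]

lemma nonneg_of_two_pow_nsmul_nonneg {x : α} (k : ℕ) (h : 0 ≤ 2 ^ k • x) : 0 ≤ x := by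
  induction k with
  | zero => simpa using h
  | succ k ih => exact ih (nsmul_two_semiclosed (by rwa [smul_smul, ← pow_succ']))

lemma add_inf_eq_zero {x y z : α} (hxz : x ⊓ z = 0) (hyz : y ⊓ z = 0) : (x + y) ⊓ z = 0 := by
  have hx : 0 ≤ x := hxz ▸ inf_le_left
  have hy : 0 ≤ y := hyz ▸ inf_le_left
  have hz : 0 ≤ z := hyz ▸ inf_le_right
  have : (x + y) ⊓ z ≤ y :=
    calc (x + y) ⊓ z ≤ (x + y) ⊓ (z + y) := inf_le_inf_left _ (le_add_of_nonneg_right hy)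
      _ = y := by rw [← inf_add, hxz, zero_add]
  exact le_antisymm (hyz ▸ le_inf this inf_le_right) (le_inf (add_nonneg hx hy) hz)

lemma sum_inf_eq_zero {ι : Type*} {s : Finset ι} {f : ι → α} {z : α} (hz : 0 ≤ z)
    (h : ∀ i ∈ s, f i ⊓ z = 0) : (∑ i ∈ s, f i) ⊓ z = 0 := by
  classical
  induction s using Finset.induction_on with
  | empty => simpa using hz
  | insert j s hj ih =>
    rw [Finset.sum_insert hj]
    exact add_inf_eq_zero (h j (s.mem_insert_self j))
      (ih fun i hi => h i (Finset.mem_insert_of_mem hi))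

lemma sum_le_of_pairwise_inf_eq_zero {ι : Type*} {s : Finset ι} {f : ι → α} {z : α}
    (hz : 0 ≤ z) (hf : ∀ i ∈ s, 0 ≤ f i) (hfz : ∀ i ∈ s, f i ≤ z)
    (hd : (s : Set ι).Pairwise fun i j => f i ⊓ f j = 0) : ∑ i ∈ s, f i ≤ z := by
  classical
  induction s using Finset.induction_on with
  | empty => simpa using hz
  | insert j s hj ih =>
    rw [Finset.coe_insert] at hd
    have hjs : f j ⊓ ∑ i ∈ s, f i = 0 := by
      rw [inf_comm]
      refine sum_inf_eq_zero (hf j (s.mem_insert_self j)) fun i hi => ?_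
      exact hd (Set.mem_insert_of_mem _ hi) (Set.mem_insert _ _) (ne_of_mem_of_not_mem hi hj)
    rw [Finset.sum_insert hj, ← inf_add_sup, hjs, zero_add]
    exact sup_le (hfz j (s.mem_insert_self j))
      (ih (fun i hi => hf i (Finset.mem_insert_of_mem hi))
        (fun i hi => hfz i (Finset.mem_insert_of_mem hi)) (hd.mono (Set.subset_insert _ _)))

lemma smul_inf_smul_eq_zero [Module ℝ α] [IsOrderedModule ℝ α] {a b : α} {c d : ℝ}
    (hc : 0 ≤ c) (hd : 0 ≤ d) (hab : a ⊓ b = 0) : c • a ⊓ d • b = 0 := by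
  have ha : 0 ≤ a := hab ▸ inf_le_left
  have hb : 0 ≤ b := hab ▸ inf_le_right
  have hN : 0 < max c d + 1 := by positivity
  refine inf_eq_zero_of_le_of_le (smul_nonneg hc ha) (smul_nonneg hd hb)
    (smul_le_smul_of_nonneg_right (le_max_left c d |>.trans (lt_add_one _).le) ha)
    (smul_le_smul_of_nonneg_right (le_max_right c d |>.trans (lt_add_one _).le) hb) ?_
  have := (OrderIso.smulRight hN).map_inf a b
  simp only [OrderIso.smulRight_apply, hab, smul_zero] at this
  exact this.symm

end LatticeOrderedGroup

section NormedLattice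

variable {E : Type*} [NormedAddCommGroup E] [Lattice E] [HasSolidNorm E] [IsOrderedAddMonoid E]
  [NormedSpace ℝ E]

/-- The closed cone contains the dyadic multiples `⌊c 2ⁿ⌋ / 2ⁿ • x`, which converge to `c • x`. -/
instance HasSolidNorm.isOrderedModule : IsOrderedModule ℝ E := by
  refine IsOrderedModule.of_smul_nonneg fun c hc x hx => ?_
  let q : ℕ → ℝ := fun n => (⌊c * 2 ^ n⌋₊ : ℝ) / 2 ^ n
  have hq : Tendsto q atTop (𝓝 c) :=
    (tendsto_nat_floor_mul_div_atTop hc).comp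
      (tendsto_pow_atTop_atTop_of_one_lt one_lt_two)
  refine isClosed_nonneg.mem_of_tendsto (hq.smul_const x) (Eventually.of_forall fun n => ?_)
  refine nonneg_of_two_pow_nsmul_nonneg n ?_
  have : 2 ^ n • q n • x = ⌊c * 2 ^ n⌋₊ • x := by
    rw [← Nat.cast_smul_eq_nsmul ℝ, ← Nat.cast_smul_eq_nsmul ℝ, smul_smul]
    congr 1
    push_cast
    exact mul_div_cancel₀ _ (by positivity)
  rw [this]
  exact nsmul_nonneg hx _

lemma exists_isGreatest_smul_le {a z : E} (ha : 0 < a) (hz : 0 ≤ z) :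
    ∃ t, IsGreatest {t : ℝ | t • a ≤ z} t := by
  refine ⟨_, IsClosed.isGreatest_csSup ?_ ⟨0, by simpa using hz⟩ ⟨‖z‖ / ‖a‖, fun t ht => ?_⟩⟩
  · exact isClosed_le (continuous_id.smul continuous_const) continuous_const
  · rcases le_or_gt t 0 with h | h
    · exact h.trans (by positivity)
    · rw [le_div_iff₀ (norm_pos_iff.2 ha.ne'), ← abs_of_pos h, ← Real.norm_eq_abs, ← norm_smul]
      exact norm_le_norm_of_abs_le_abs <| by
        rwa [abs_of_nonneg (smul_nonneg h.le ha.le), abs_of_nonneg hz]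

/-- With `t` maximal such that `t • a ≤ z`, the positive and negative parts of
`z - t • a - ε • a` are disjoint elements below `a`, so one vanishes; maximality of `t` rules
out the negative part, hence `0 ≤ z - t • a ≤ ε • a` for every `ε ∈ (0, 1]`. -/
lemma exists_eq_smul_of_not_splittable {a z : E} (ha : 0 < a) (hns : ¬ Splittable a)
    (hz : 0 ≤ z) (hza : z ≤ a) : ∃ t : ℝ, z = t • a := by
  obtain ⟨t, ht, htmax⟩ := exists_isGreatest_smul_le ha hz
  have ht0 : 0 ≤ t := htmax (by simpa using hz)
  set w := z - t • a
  have hw0 : 0 ≤ w := sub_nonneg.2 ht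
  have hwz : w ≤ z := sub_le_self _ (smul_nonneg ht0 ha.le)
  have hw_le : ∀ ε : ℝ, 0 < ε → ε ≤ 1 → w ≤ ε • a := by
    intro ε hε hε1
    have hεa : ε • a ≤ a := by
      simpa using smul_le_smul_of_nonneg_right hε1 ha.le
    have hpos : (w - ε • a)⁺ ≤ a :=
      (sup_le (sub_le_self _ (smul_nonneg hε.le ha.le)) hw0).trans (hwz.trans hza)
    have hneg : (w - ε • a)⁻ ≤ a := by
      rw [negPart_def, neg_sub]
      exact sup_le ((sub_le_self _ hw0).trans hεa) ha.le
    by_contra hw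
    refine hns ⟨_, _, ?_, ?_, posPart_inf_negPart_eq_zero _, hpos, hneg⟩
    · exact (posPart_nonneg _).lt_of_ne' fun h => hw (sub_nonpos.1 (posPart_eq_zero.1 h))
    · refine (negPart_nonneg _).lt_of_ne' fun h => ?_
      have : (t + ε) • a ≤ z := by
        rw [add_smul, ← le_sub_iff_add_le']
        exact sub_nonneg.1 (negPart_eq_zero.1 h)
      linarith [htmax this]
  have hw : w ≤ 0 := by
    have hlim : Tendsto (fun n : ℕ => (1 / (n + 1) : ℝ) • a) atTop (𝓝 0) := by
      rw [← zero_smul ℝ a]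
      exact tendsto_one_div_add_atTop_nhds_zero_nat.smul_const a
    refine le_of_tendsto_of_tendsto' tendsto_const_nhds hlim fun n => hw_le _ ?_ ?_
    · positivity
    · rw [div_le_one (by positivity)]
      linarith [n.cast_nonneg (α := ℝ)]
  exact ⟨t, sub_eq_zero.1 (le_antisymm hw hw0)⟩

/-- `z` is the sum of its components `t a • a`, `t a` maximal with `t a • a ≤ z`: the remainder
`z - ∑ t a • a` is positive and, by maximality of each `t a`, disjoint from every `a ∈ M`. -/
lemma mem_span_unsplittable_of_nonneg {M : Set E} (hMfin : M.Finite)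
    (hM : ∀ a ∈ M, 0 < a ∧ ¬ Splittable a) (hMd : M.Pairwise fun a b => a ⊓ b = 0)
    (hMmax : ∀ x, 0 < x → ∃ a ∈ M, x ⊓ a ≠ 0) {z : E} (hz : 0 ≤ z) : z ∈ Submodule.span ℝ M := by
  choose! t ht using fun a (ha : a ∈ M) => exists_isGreatest_smul_le (hM a ha).1 hz
  have ht0 : ∀ a ∈ M, 0 ≤ t a := fun a ha => (ht a ha).2 (by simpa using hz)
  set v := ∑ a ∈ hMfin.toFinset, t a • a
  have hterm_nonneg : ∀ a ∈ hMfin.toFinset, 0 ≤ t a • a := fun a ha =>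
    smul_nonneg (ht0 a (hMfin.mem_toFinset.1 ha)) (hM a (hMfin.mem_toFinset.1 ha)).1.le
  have hvz : v ≤ z := by
    refine sum_le_of_pairwise_inf_eq_zero hz hterm_nonneg
      (fun a ha => (ht a (hMfin.mem_toFinset.1 ha)).1) fun a ha b hb hab => ?_
    rw [Set.Finite.coe_toFinset] at ha hb
    exact smul_inf_smul_eq_zero (ht0 a ha) (ht0 b hb) (hMd ha hb hab)
  have hdisj : ∀ a ∈ M, (z - v) ⊓ a = 0 := by
    intro a ha
    obtain ⟨s, hs⟩ := exists_eq_smul_of_not_splittable (hM a ha).1 (hM a ha).2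
      (le_inf (sub_nonneg.2 hvz) (hM a ha).1.le) inf_le_right
    have hsa : (s + t a) • a ≤ z :=
      calc (s + t a) • a ≤ (z - v) + v := by
            rw [add_smul, ← hs]
            exact add_le_add inf_le_left
              (Finset.single_le_sum hterm_nonneg (hMfin.mem_toFinset.2 ha))
        _ = z := sub_add_cancel z v
    have hs0 : s ≤ 0 := by linarith [(ht a ha).2 hsa]
    exact le_antisymm (hs ▸ smul_nonpos_of_nonpos_of_nonneg hs0 (hM a ha).1.le)
      (le_inf (sub_nonneg.2 hvz) (hM a ha).1.le)
  have hzv : z - v = 0 := by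
    by_contra h
    obtain ⟨a, ha, hne⟩ := hMmax _ ((sub_nonneg.2 hvz).lt_of_ne' h)
    exact hne (hdisj a ha)
  rw [sub_eq_zero.1 hzv]
  exact Submodule.sum_mem _ fun a ha =>
    Submodule.smul_mem _ _ (Submodule.subset_span (hMfin.mem_toFinset.1 ha))

theorem hasPosDisjointSeq_of_not_finiteDimensional (h : ¬ FiniteDimensional ℝ E) :
    HasPosDisjointSeq E := by
  by_contra H
  obtain ⟨M, hMfin, hM, hMd, hMmax⟩ := exists_finite_maximal_unsplittable H
  have hspan : Submodule.span ℝ M = ⊤ := by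
    refine eq_top_iff.2 fun x _ => ?_
    rw [← posPart_sub_negPart x]
    exact sub_mem (mem_span_unsplittable_of_nonneg hMfin hM hMd hMmax (posPart_nonneg x))
      (mem_span_unsplittable_of_nonneg hMfin hM hMd hMmax (negPart_nonneg x))
  exact h ⟨hspan ▸ Submodule.fg_span hMfin⟩

theorem exists_normalized_disjoint_seq (h : ¬ FiniteDimensional ℝ E) :
    ∃ y : ℕ → E, (∀ n, 0 ≤ y n) ∧ (∀ n, ‖y n‖ = 1) ∧ Pairwise fun n m => y n ⊓ y m = 0 := by
  obtain ⟨y, hpos, hdisj⟩ := hasPosDisjointSeq_of_not_finiteDimensional h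
  have hn : ∀ n, 0 < ‖y n‖ := fun n => norm_pos_iff.2 (hpos n).ne'
  refine ⟨fun n => ‖y n‖⁻¹ • y n, fun n => smul_nonneg (inv_nonneg.2 (hn n).le) (hpos n).le,
    fun n => ?_, fun n m hnm => ?_⟩
  · rw [norm_smul, norm_inv, norm_norm, inv_mul_cancel₀ (hn n).ne']
  · exact smul_inf_smul_eq_zero (inv_nonneg.2 (hn n).le) (inv_nonneg.2 (hn m).le) (hdisj hnm)

end NormedLattice

theorem prod_not_hasBLProperty_general (E : Type*) [NormedAddCommGroup E] [Lattice E] [HasSolidNorm E]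
    [IsOrderedAddMonoid E]
    [NormedSpace ℝ E] (hdim : ¬ FiniteDimensional ℝ E) :
    ¬ HasBLProperty (ℝ × E) ∧
      ∀ y : ℕ → E, (∀ n, 0 ≤ y n) → (∀ n, ‖y n‖ = 1) →
        (Pairwise fun n m => y n ⊓ y m = 0) →
        (∀ n, (0 : ℝ × E) ≤ ((0 : ℝ), y n)) ∧
        (∀ n, ‖(((0 : ℝ), y n) : ℝ × E)‖ = 1) ∧
        (Pairwise fun n m => (((0 : ℝ), y n) : ℝ × E) ⊓ ((0 : ℝ), y m) = 0) ∧
        (0 : ℝ × E) < ((1 : ℝ), (0 : E)) ∧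
        limsup (fun n => ‖(((1 : ℝ), (0 : E)) : ℝ × E) + ((0 : ℝ), y n)‖) atTop = 1 ∧
        ‖(((1 : ℝ), (0 : E)) : ℝ × E)‖ = 1 := by
  refine (and_iff_right_of_imp fun witness hBL => ?_).2 fun y hy_nonneg hy_norm hy_disj => ?_
  · obtain ⟨y, hy_nonneg, hy_norm, hy_disj⟩ := exists_normalized_disjoint_seq hdim
    obtain ⟨hu, hu_norm, hu_disj, hu₀, hlimsup, hu₀_norm⟩ := witness y hy_nonneg hy_norm hy_disj
    exact (hBL _ _ hu hu_norm hu_disj hu₀).ne (hu₀_norm.trans hlimsup.symm)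
  · exact ⟨fun n => by simpa [Prod.le_def] using hy_nonneg n,
      fun n => by simp [Prod.norm_def, hy_norm], fun n m hnm => by simp [hy_disj hnm],
      by simp [Prod.lt_iff], by simp [Prod.norm_def, hy_norm], by simp [Prod.norm_def]⟩

/-- If `E` is an infinite-dimensional Banach lattice with the Brezis–Lieb property, then
`E₁ = ℝ ⊕_∞ E` (i.e. `ℝ × E` with the coordinatewise order and the sup norm) does not
have the Brezis–Lieb property; moreover, for any disjoint normalized positive sequence
`(yₙ)` in `E`, the elements `u₀ = (1,0)` and `uₙ = (0, yₙ)` form a disjoint normalized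
positive sequence in `E₁` with `limsup ‖u₀ + uₙ‖ = 1 = ‖u₀‖`. -/
theorem prod_not_hasBLProperty (E : Type*) [NormedAddCommGroup E] [Lattice E] [HasSolidNorm E]
    [IsOrderedAddMonoid E]
    [NormedSpace ℝ E] [CompleteSpace E] (hdim : ¬ FiniteDimensional ℝ E)
    (hbl : HasBLProperty E) :
    ¬ HasBLProperty (ℝ × E) ∧
      ∀ y : ℕ → E, (∀ n, 0 ≤ y n) → (∀ n, ‖y n‖ = 1) →
        (Pairwise fun n m => y n ⊓ y m = 0) →
        (∀ n, (0 : ℝ × E) ≤ ((0 : ℝ), y n)) ∧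
        (∀ n, ‖(((0 : ℝ), y n) : ℝ × E)‖ = 1) ∧
        (Pairwise fun n m => (((0 : ℝ), y n) : ℝ × E) ⊓ ((0 : ℝ), y m) = 0) ∧
        (0 : ℝ × E) < ((1 : ℝ), (0 : E)) ∧
        limsup (fun n => ‖(((1 : ℝ), (0 : E)) : ℝ × E) + ((0 : ℝ), y n)‖) atTop = 1 ∧
        ‖(((1 : ℝ), (0 : E)) : ℝ × E)‖ = 1 :=
  prod_not_hasBLProperty_general E hdim
end

section
/- Let E be a σ-Dedekind complete Banach lattice that is a σ-Brezis–Lieb space. Then the norm on E is order continuous. -/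
/-!
If the norm is not order continuous, some net `x_α ↓ 0` does not converge to `0` in norm; by
completeness it is then not Cauchy, which yields positive elements `u_n` with `‖u_n‖ ≥ δ` and order
bounded partial sums. Index the `u_n` by a dense sequence `q_n` of reals and let `X θ` be the
supremum (σ-Dedekind completeness) of the partial sums over `{n | q_n < θ}`. The monotone function
`θ ↦ ‖X θ‖` is continuous at some `t`, and `X θ_j ↑ X t` for `θ_j ↑ t`: this order convergence
together with the convergence of norms gives `‖X t - X θ_j‖ → 0` by the σ-Brezis–Lieb property,
whereas each `X t - X θ_j` dominates some `u_n` and so has norm at least `δ`.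
-/

open Filter Topology MeasureTheory

def IsOrderSumOn {E : Type*} [AddCommMonoid E] [Preorder E] (u : ℕ → E) (S : Set ℕ) (x : E) :
    Prop :=
  IsLUB (Set.range fun n => ∑ i ∈ Finset.range n, S.indicator u i) x

namespace IsOrderSumOn

open Finset

variable {E : Type*} [AddCommGroup E] [PartialOrder E] [IsOrderedAddMonoid E] {u : ℕ → E}
  {S T : Set ℕ} {x y : E}

theorem mono (hu : ∀ n, 0 ≤ u n) (hx : IsOrderSumOn u S x) (hy : IsOrderSumOn u T y)
    (hST : S ⊆ T) : x ≤ y :=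
  hx.2 <| by
    rintro _ ⟨n, rfl⟩
    exact (sum_le_sum fun i _ => Set.indicator_le_indicator_of_subset hST (fun _ => hu _) i).trans
      (hy.1 ⟨n, rfl⟩)

theorem add_le_of_insert_subset (hu : ∀ n, 0 ≤ u n) (hx : IsOrderSumOn u S x)
    (hy : IsOrderSumOn u T y) {i : ℕ} (hi : i ∉ S) (hiT : insert i S ⊆ T) : x + u i ≤ y := by
  rw [← le_sub_iff_add_le]
  refine hx.2 ?_
  rintro _ ⟨n, rfl⟩
  rw [le_sub_iff_add_le]
  set N := max n (i + 1)
  have hpoint : ∀ k, S.indicator u k + (if k = i then u i else 0) ≤ T.indicator u k := by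
    intro k
    split_ifs with hk
    · subst hk
      simp [hi, hiT (Set.mem_insert k S)]
    · simpa using Set.indicator_le_indicator_of_subset ((Set.subset_insert i S).trans hiT)
        (fun _ => hu _) k
  calc ∑ k ∈ range n, S.indicator u k + u i
      ≤ ∑ k ∈ range N, S.indicator u k + u i := by
        gcongr
        · exact fun k _ _ => Set.indicator_nonneg (fun _ _ => hu _) k
        · exact le_max_left _ _
    _ = ∑ k ∈ range N, (S.indicator u k + if k = i then u i else 0) := by
        rw [sum_add_distrib, sum_ite_eq', if_pos (mem_range.2 (lt_max_of_lt_right i.lt_succ_self))]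
    _ ≤ ∑ k ∈ range N, T.indicator u k := sum_le_sum fun k _ => hpoint k
    _ ≤ y := hy.1 ⟨N, rfl⟩

theorem isLUB_of_iUnion (hu : ∀ n, 0 ≤ u n) {S : ℕ → Set ℕ} (hS : Monotone S) {x : ℕ → E}
    (hx : ∀ j, IsOrderSumOn u (S j) (x j)) (hy : IsOrderSumOn u (⋃ j, S j) y) :
    IsLUB (Set.range x) y := by
  refine ⟨?_, fun w hw => hy.2 ?_⟩
  · rintro _ ⟨j, rfl⟩
    exact (hx j).mono hu hy (Set.subset_iUnion S j)
  · rintro _ ⟨n, rfl⟩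
    have hev : ∀ k ∈ range n, ∀ᶠ j in atTop, k ∈ ⋃ i, S i → k ∈ S j := by
      intro k _
      by_cases hk : k ∈ ⋃ i, S i
      · obtain ⟨i, hi⟩ := Set.mem_iUnion.1 hk
        exact (eventually_ge_atTop i).mono fun j hj _ => hS hj hi
      · exact Eventually.of_forall fun _ h => absurd h hk
    obtain ⟨j, hj⟩ := ((eventually_all_finset _).2 hev).exists
    calc ∑ k ∈ range n, (⋃ j, S j).indicator u k
        ≤ ∑ k ∈ range n, (S j).indicator u k := by
          refine sum_le_sum fun k hk => ?_
          by_cases hkS : k ∈ ⋃ j, S j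
          · rw [Set.indicator_of_mem hkS, Set.indicator_of_mem (hj k hk hkS)]
          · rw [Set.indicator_of_notMem hkS]
            exact Set.indicator_nonneg (fun _ _ => hu _) k
      _ ≤ x j := (hx j).1 ⟨n, rfl⟩
      _ ≤ w := hw ⟨j, rfl⟩

end IsOrderSumOn

theorem uoConvNet_of_monotone_of_isLUB {E : Type*} [Lattice E] [AddCommGroup E]
    [IsOrderedAddMonoid E] {ι : Type*} [Preorder ι] {y : ι → E} {x₀ : E} (hy : Monotone y)
    (hx₀ : IsLUB (Set.range y) x₀) : UOConvNet y x₀ := by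
  have hle : ∀ j, y j ≤ x₀ := fun j => hx₀.1 ⟨j, rfl⟩
  have hglb : IsGLB (Set.range fun j => x₀ - y j) 0 := by
    refine ⟨?_, fun w hw => ?_⟩
    · rintro _ ⟨j, rfl⟩
      exact sub_nonneg.2 (hle j)
    · exact (le_sub_self_iff x₀).1 <| hx₀.2 fun _ ⟨j, hj⟩ => hj ▸ le_sub_comm.1 (hw ⟨j, rfl⟩)
  intro v hv
  refine ⟨fun j => x₀ - y j, fun i j hij => sub_le_sub_left (hy hij) _, hglb,
    Eventually.of_forall fun j => ?_⟩
  dsimp only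
  rw [sub_zero, abs_sub_comm, abs_of_nonneg (sub_nonneg.2 (hle j)),
    abs_of_nonneg (le_inf (sub_nonneg.2 (hle j)) hv)]
  exact inf_le_left

theorem Monotone.exists_continuousAt {f : ℝ → ℝ} (hf : Monotone f) : ∃ t, ContinuousAt f t := by
  by_contra! h
  exact Set.not_countable_univ (hf.countable_not_continuousAt.mono fun t _ => h t)

theorem cauchySeq_of_forall_exists_forall_ge_dist_lt {α ι : Type*} [PseudoMetricSpace α]
    [Preorder ι] [IsDirectedOrder ι] [Nonempty ι] {x : ι → α}
    (h : ∀ ε > 0, ∃ i, ∀ j ≥ i, dist (x j) (x i) < ε) : CauchySeq x := by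
  refine Metric.cauchy_iff.2 ⟨map_neBot, fun ε hε => ?_⟩
  obtain ⟨i, hi⟩ := h (ε / 2) (half_pos hε)
  refine ⟨x '' Set.Ici i, image_mem_map (Ici_mem_atTop i), ?_⟩
  rintro _ ⟨j, hj, rfl⟩ _ ⟨k, hk, rfl⟩
  calc dist (x j) (x k) ≤ dist (x j) (x i) + dist (x k) (x i) := dist_triangle_right _ _ _
    _ < ε := by linarith [hi j hj, hi k hk]

theorem exists_seq_dist_ge_of_not_cauchySeq {α ι : Type*} [PseudoMetricSpace α]
    [Preorder ι] [IsDirectedOrder ι] [Nonempty ι] {x : ι → α} (hx : ¬CauchySeq x) :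
    ∃ δ > 0, ∃ A : ℕ → ι, Monotone A ∧ ∀ n, δ ≤ dist (x (A (n + 1))) (x (A n)) := by
  contrapose! hx
  refine cauchySeq_of_forall_exists_forall_ge_dist_lt fun δ hδ => ?_
  by_contra! hgap
  choose next hle hdist using hgap
  let A : ℕ → ι := fun n => next^[n] (Classical.arbitrary ι)
  have hA : ∀ n, A (n + 1) = next (A n) := fun n => Function.iterate_succ_apply' next n _
  obtain ⟨n, hn⟩ := hx δ hδ A (monotone_nat_of_le_succ fun n => hA n ▸ hle (A n))
  exact hn.not_ge (hA n ▸ hdist (A n))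

theorem norm_le_norm_of_nonneg_of_le {E : Type*} [NormedAddCommGroup E] [Lattice E]
    [HasSolidNorm E] [IsOrderedAddMonoid E] {a b : E} (ha : 0 ≤ a) (hab : a ≤ b) : ‖a‖ ≤ ‖b‖ :=
  norm_le_norm_of_abs_le_abs <| by rwa [abs_of_nonneg ha, abs_of_nonneg (ha.trans hab)]

theorem IsSigmaBLSpace.exists_norm_lt_of_sum_range_le {E : Type*} [NormedAddCommGroup E]
    [Lattice E] [HasSolidNorm E] [IsOrderedAddMonoid E] (hBL : IsSigmaBLSpace E)
    (hσ : SigmaDedekindComplete E) {u : ℕ → E} (hu : ∀ n, 0 ≤ u n) {b : E}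
    (hb : ∀ n, ∑ i ∈ Finset.range n, u i ≤ b) {δ : ℝ} (hδ : 0 < δ) : ∃ n, ‖u n‖ < δ := by
  let q := TopologicalSpace.denseSeq ℝ
  let S : ℝ → Set ℕ := fun θ => {i | q i < θ}
  have hS : Monotone S := fun θ θ' h i hi => lt_of_lt_of_le hi h
  have hXex : ∀ θ, ∃ X, IsOrderSumOn u (S θ) X := fun θ =>
    hσ _ b fun n => (Finset.sum_le_sum fun i _ => Set.indicator_le_self' (fun _ _ => hu i) i).trans
      (hb n)
  choose X hX using hXex
  have hXmono : Monotone X := fun θ θ' h => (hX θ).mono hu (hX θ') (hS h)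
  obtain ⟨t, ht⟩ := Monotone.exists_continuousAt fun θ θ' h =>
    norm_le_norm_of_nonneg_of_le ((hX θ).1 ⟨0, by simp⟩) (hXmono h)
  obtain ⟨θ, hθmono, hθt, hθlim⟩ := exists_seq_strictMono_tendsto t
  have hSt : S t = ⋃ j, S (θ j) := by
    refine (Set.iUnion_subset fun j => hS (hθt j).le).antisymm' fun i (hi : q i < t) => ?_
    obtain ⟨j, hj⟩ := (hθlim.eventually (eventually_gt_nhds hi)).exists
    exact Set.mem_iUnion.2 ⟨j, hj⟩
  have hlub : IsLUB (Set.range (X ∘ θ)) (X t) :=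
    IsOrderSumOn.isLUB_of_iUnion hu (hS.comp hθmono.monotone) (fun j => hX (θ j)) (hSt ▸ hX t)
  have hconv := hBL _ _ (uoConvNet_of_monotone_of_isLUB (hXmono.comp hθmono.monotone) hlub)
    (ht.tendsto.comp hθlim)
  obtain ⟨j, hj⟩ := (hconv.eventually (eventually_lt_nhds hδ)).exists
  obtain ⟨_, ⟨i, rfl⟩, hθi, hit⟩ :=
    Dense.exists_between (TopologicalSpace.denseRange_denseSeq ℝ) (hθt j)
  -- `u i` is summed into `X t` but not into `X (θ j)`
  have hui : u i ≤ X t - X (θ j) := le_sub_iff_add_le'.2 <|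
    (hX (θ j)).add_le_of_insert_subset hu (hX t) (lt_asymm hθi)
      (Set.insert_subset hit (hS (hθt j).le))
  refine ⟨i, (norm_le_norm_of_nonneg_of_le (hu i) hui).trans_lt ?_⟩
  simpa [norm_sub_rev] using hj

/-- A σ-Dedekind complete Banach lattice which is a σ-Brezis–Lieb space has order
continuous norm. -/
theorem sigmaBLSpace_orderContinuousNorm (E : Type*) [NormedAddCommGroup E] [Lattice E] [HasSolidNorm E]
    [IsOrderedAddMonoid E]
    [CompleteSpace E] (hσ : SigmaDedekindComplete E) (h : IsSigmaBLSpace E) :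
    HasOrderContinuousNorm E := by
  intro ι _ _ _ x hx hglb
  by_cases hcauchy : CauchySeq x
  · obtain ⟨z, hz⟩ := cauchySeq_tendsto_of_complete hcauchy
    rw [(isGLB_of_tendsto_atTop hx hz).unique hglb] at hz
    simpa using hz.norm
  obtain ⟨δ, hδ, A, hA, hgap⟩ := exists_seq_dist_ge_of_not_cauchySeq hcauchy
  have hsum : ∀ n, ∑ i ∈ Finset.range n, (x (A i) - x (A (i + 1))) = x (A 0) - x (A n) :=
    Finset.sum_range_sub' fun i => x (A i)
  obtain ⟨n, hn⟩ := h.exists_norm_lt_of_sum_range_le hσ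
    (fun n => sub_nonneg.2 (hx (hA n.le_succ)))
    (fun n => (hsum n).trans_le (sub_le_self _ (hglb.1 ⟨A n, rfl⟩))) hδ
  exact absurd (hgap n) (by rwa [dist_eq_norm', not_le])
end

section
/- Let 1 ≤ p < ∞ and let (f_α) be a net in L^p(μ) with f_α uo-converging to f and ‖f_α‖_p → ‖f‖_p. Then ‖f_α - f‖_p → 0. -/
open Filter Topology MeasureTheory

/-!
For `q = p.toReal ≥ 1` the elementary inequality
`(1 - ε) (|a| ^ q + |b| ^ q) ≤ |a + b| ^ q + C_ε min(|a|, |b|) ^ q` integrates to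
`(1 - ε) (‖f₀‖ ^ q + ‖f α - f₀‖ ^ q) ≤ ‖f α‖ ^ q + C_ε ‖|f α - f₀| ⊓ |f₀|‖ ^ q`.
The last term tends to `0`: uo-convergence tested against `u = |f₀|` is order convergence, and the
norm of `Lᵖ` is order continuous, because `‖x - y‖ ^ q ≤ ‖x‖ ^ q - ‖y‖ ^ q` for `0 ≤ y ≤ x` makes
a decreasing net Cauchy, and its limit must be its infimum `0`. Letting `ε → 0` gives the theorem.
-/

theorem ENNReal.one_le_toReal {p : ENNReal} (hp1 : 1 ≤ p) (hp : p ≠ ⊤) : 1 ≤ p.toReal := by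
  simpa using ENNReal.toReal_mono hp hp1

theorem Real.rpow_sub_rpow_le_mul_sub {q x y : ℝ} (hq : 1 ≤ q) (hx : 0 ≤ x) (hxy : x ≤ y) :
    y ^ q - x ^ q ≤ q * y ^ (q - 1) * (y - x) := by
  rcases hxy.eq_or_lt with rfl | hlt
  · simp
  have := (convexOn_rpow hq).slope_le_of_hasDerivAt hx (hx.trans hxy) hlt
    (Real.hasDerivAt_rpow_const (Or.inr hq))
  rwa [slope_def_field, div_le_iff₀ (sub_pos.2 hlt)] at this

theorem Real.one_sub_mul_abs_rpow_add_abs_rpow_le {q ε : ℝ} (hq : 1 ≤ q) (hε : 0 < ε) (a b : ℝ) :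
    (1 - ε) * (|a| ^ q + |b| ^ q) ≤ |a + b| ^ q + 2 * ((q + 1) / ε) ^ q * min |a| |b| ^ q := by
  wlog hba : |b| ≤ |a| generalizing a b
  · simpa only [add_comm, min_comm] using this b a (le_of_not_ge hba)
  rw [min_eq_right hba]
  set K := (q + 1) / ε
  have hA := abs_nonneg a
  have hB := abs_nonneg b
  have hAq := Real.rpow_nonneg hA q
  have hBq := Real.rpow_nonneg hB q
  have hKq := Real.rpow_nonneg (by positivity : 0 ≤ K) q
  have hpow_split (x : ℝ) (hx : 0 ≤ x) : x ^ q = x ^ (q - 1) * x := by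
    rw [← Real.rpow_add_one' hx (by linarith), sub_add_cancel]
  rcases le_or_gt |a| (K * |b|) with hcomp | hsmall
  · -- comparable sizes: everything is absorbed by the overlap term
    have h1 : |b| ^ q ≤ |a| ^ q := Real.rpow_le_rpow hB hba (by linarith)
    have h2 : |a| ^ q ≤ K ^ q * |b| ^ q := by
      rw [← Real.mul_rpow (by positivity) hB]; exact Real.rpow_le_rpow hA hcomp (by linarith)
    nlinarith [Real.rpow_nonneg (abs_nonneg (a + b)) q]
  · have h1 : |a| ^ q - |a + b| ^ q ≤ q * |a| ^ (q - 1) * |b| := by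
      have hsub : |a| - |b| ≤ |a + b| := by simpa using abs_sub_abs_le_abs_sub a (-b)
      have := Real.rpow_sub_rpow_le_mul_sub hq (sub_nonneg.2 hba) (sub_le_self _ hB)
      have := Real.rpow_le_rpow (sub_nonneg.2 hba) hsub (by linarith : 0 ≤ q)
      linarith
    have h2 : |b| ^ q ≤ |a| ^ (q - 1) * |b| := by
      rw [hpow_split _ hB]
      exact mul_le_mul_of_nonneg_right (Real.rpow_le_rpow hB hba (by linarith)) hB
    have h3 : (q + 1) * |b| ≤ ε * |a| := by
      have : ε * K = q + 1 := mul_div_cancel₀ _ hε.ne'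
      nlinarith
    have h4 : (q + 1) * (|a| ^ (q - 1) * |b|) ≤ ε * |a| ^ q := by
      rw [hpow_split _ hA]
      nlinarith [Real.rpow_nonneg hA (q - 1)]
    nlinarith

theorem hasOrderContinuousNorm_of_norm_rpow_sub_le {E : Type*} [NormedAddCommGroup E] [Lattice E]
    [CompleteSpace E] [OrderClosedTopology E] {q : ℝ} (hq : 0 < q)
    (h : ∀ x y : E, 0 ≤ y → y ≤ x → ‖x - y‖ ^ q ≤ ‖x‖ ^ q - ‖y‖ ^ q) :
    HasOrderContinuousNorm E := by
  intro ι _ _ _ z hz hglb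
  have hz0 (α : ι) : 0 ≤ z α := hglb.1 ⟨α, rfl⟩
  have hbdd : BddBelow (Set.range fun α => ‖z α‖ ^ q) :=
    ⟨0, by rintro _ ⟨α, rfl⟩; positivity⟩
  set c := ⨅ α, ‖z α‖ ^ q
  have htail (ε : ℝ) (hε : 0 < ε) : ∃ α₀, ∀ β ≥ α₀, dist (z β) (z α₀) < ε := by
    obtain ⟨α₀, hα₀⟩ := exists_lt_of_ciInf_lt (lt_add_of_pos_right c (Real.rpow_pos_of_pos hε q))
    refine ⟨α₀, fun β hβ => ?_⟩
    have hβc : c ≤ ‖z β‖ ^ q := ciInf_le hbdd β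
    have := h _ _ (hz0 β) (hz hβ)
    rw [dist_comm, dist_eq_norm, ← Real.rpow_lt_rpow_iff (norm_nonneg _) hε.le hq]
    linarith
  obtain ⟨w, hw⟩ : ∃ w, Tendsto z atTop (𝓝 w) := by
    refine cauchy_map_iff_exists_tendsto.1 (Metric.cauchy_iff.2 ⟨inferInstance, fun ε hε => ?_⟩)
    obtain ⟨α₀, hα₀⟩ := htail (ε / 2) (half_pos hε)
    refine ⟨z '' Set.Ici α₀, image_mem_map (Ici_mem_atTop α₀), ?_⟩
    rintro _ ⟨β, hβ, rfl⟩ _ ⟨γ, hγ, rfl⟩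
    linarith [dist_triangle_right (z β) (z γ) (z α₀), hα₀ β hβ, hα₀ γ hγ]
  have hw_lb : w ∈ lowerBounds (Set.range z) := by
    rintro _ ⟨α, rfl⟩
    exact le_of_tendsto hw ((eventually_ge_atTop α).mono fun β hβ => hz hβ)
  have hw0 : w = 0 := le_antisymm (hglb.2 hw_lb) (ge_of_tendsto' hw hz0)
  simpa [hw0] using hw.norm

theorem OrderConvNet.tendsto_norm_zero {E : Type*} [NormedAddCommGroup E] [Lattice E]
    [HasSolidNorm E] [IsOrderedAddMonoid E] (hE : HasOrderContinuousNorm E)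
    {ι : Type} [Preorder ι] [IsDirected ι (· ≤ ·)] [Nonempty ι] {x : ι → E}
    (hx : OrderConvNet x 0) : Tendsto (fun α => ‖x α‖) atTop (𝓝 0) := by
  obtain ⟨z, hz, hglb, hdom⟩ := hx
  refine squeeze_zero' (Eventually.of_forall fun _ => norm_nonneg _) ?_ (hE ι z hz hglb)
  filter_upwards [hdom] with α hα
  refine norm_le_norm_of_abs_le_abs ?_
  rwa [sub_zero, ← abs_of_nonneg (hglb.1 ⟨α, rfl⟩)] at hα

namespace MeasureTheory.Lp

variable {Ω E : Type*} [MeasurableSpace Ω] {μ : Measure Ω} {p : ENNReal}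

theorem norm_rpow_toReal_eq_integral [NormedAddCommGroup E] (hp0 : p ≠ 0) (hp : p ≠ ⊤)
    (f : Lp E p μ) : ‖f‖ ^ p.toReal = ∫ x, ‖f x‖ ^ p.toReal ∂μ := by
  have hint : 0 ≤ ∫ x, ‖f x‖ ^ p.toReal ∂μ := integral_nonneg fun x => by positivity
  rw [norm_def, toReal_eLpNorm (Lp.aestronglyMeasurable f),
    lpNorm_eq_integral_norm_rpow_toReal hp0 hp (Lp.aestronglyMeasurable f),
    Real.rpow_inv_rpow hint (ENNReal.toReal_pos hp0 hp).ne']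

variable [Fact (1 ≤ p)]

theorem norm_sub_rpow_le_of_le (hp : p ≠ ⊤) {f g : Lp ℝ p μ} (hg : 0 ≤ g) (hgf : g ≤ f) :
    ‖f - g‖ ^ p.toReal ≤ ‖f‖ ^ p.toReal - ‖g‖ ^ p.toReal := by
  have hp0 : p ≠ 0 := (zero_lt_one.trans_le Fact.out).ne'
  have hint (h : Lp ℝ p μ) : Integrable (fun x => ‖h x‖ ^ p.toReal) μ :=
    (Lp.memLp h).integrable_norm_rpow hp0 hp
  simp only [le_sub_iff_add_le, norm_rpow_toReal_eq_integral hp0 hp]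
  rw [← integral_add (hint _) (hint _)]
  refine integral_mono_ae ((hint _).add (hint _)) (hint _) ?_
  filter_upwards [Lp.coeFn_sub f g, (Lp.coeFn_nonneg g).2 hg, (Lp.coeFn_le g f).2 hgf]
    with x hsub hg0 hgfx
  simp only [hsub, Pi.sub_apply, Real.norm_eq_abs, abs_of_nonneg hg0,
    abs_of_nonneg (sub_nonneg.2 hgfx), abs_of_nonneg (hg0.trans hgfx)]
  simpa using Real.add_rpow_le_rpow_add (sub_nonneg.2 hgfx) hg0 (ENNReal.one_le_toReal Fact.out hp)

theorem exists_one_sub_mul_norm_rpow_le (hp : p ≠ ⊤) {ε : ℝ} (hε : 0 < ε) :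
    ∃ C, ∀ f g : Lp ℝ p μ, (1 - ε) * (‖f‖ ^ p.toReal + ‖g‖ ^ p.toReal) ≤
      ‖f + g‖ ^ p.toReal + C * ‖|f| ⊓ |g|‖ ^ p.toReal := by
  have hp0 : p ≠ 0 := (zero_lt_one.trans_le Fact.out).ne'
  have hint (h : Lp ℝ p μ) : Integrable (fun x => ‖h x‖ ^ p.toReal) μ :=
    (Lp.memLp h).integrable_norm_rpow hp0 hp
  refine ⟨2 * ((p.toReal + 1) / ε) ^ p.toReal, fun f g => ?_⟩
  simp only [norm_rpow_toReal_eq_integral hp0 hp]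
  rw [← integral_add (hint _) (hint _), ← integral_const_mul, ← integral_const_mul,
    ← integral_add (hint _) ((hint _).const_mul _)]
  refine integral_mono_ae (((hint _).add (hint _)).const_mul _)
    ((hint _).add ((hint _).const_mul _)) ?_
  filter_upwards [Lp.coeFn_add f g, Lp.coeFn_inf |f| |g|, Lp.coeFn_abs f, Lp.coeFn_abs g]
    with x hadd hinf hf hg
  simp only [hadd, hinf, hf, hg, Pi.add_apply, Pi.inf_apply, Real.norm_eq_abs,
    abs_of_nonneg (le_min (abs_nonneg (f x)) (abs_nonneg (g x)))]
  exact Real.one_sub_mul_abs_rpow_add_abs_rpow_le (ENNReal.one_le_toReal Fact.out hp) hε _ _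

theorem hasOrderContinuousNorm (hp : p ≠ ⊤) : HasOrderContinuousNorm (Lp ℝ p μ) :=
  hasOrderContinuousNorm_of_norm_rpow_sub_le
    (zero_lt_one.trans_le (ENNReal.one_le_toReal Fact.out hp))
    fun _ _ hy hyx => norm_sub_rpow_le_of_le hp hy hyx

theorem tendsto_norm_sub_of_tendsto_norm_abs_sub_inf {ι : Type*} {l : Filter ι}
    (hp : p ≠ ⊤) {f : ι → Lp ℝ p μ} {f₀ : Lp ℝ p μ}
    (hinf : Tendsto (fun α => ‖|f α - f₀| ⊓ |f₀|‖) l (𝓝 0))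
    (hnorm : Tendsto (fun α => ‖f α‖) l (𝓝 ‖f₀‖)) :
    Tendsto (fun α => ‖f α - f₀‖) l (𝓝 0) := by
  set q := p.toReal
  have hq : 0 < q := zero_lt_one.trans_le (ENNReal.one_le_toReal Fact.out hp)
  suffices h : Tendsto (fun α => ‖f α - f₀‖ ^ q) l (𝓝 0) by
    simpa [← Real.rpow_mul (norm_nonneg _), hq.ne'] using
      h.rpow_const (p := q⁻¹) (Or.inr (by positivity))
  set K := ‖f₀‖ ^ q + (2 * ‖f₀‖ + 1) ^ q
  have hK : 0 < K := by positivity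
  refine tendsto_order.2 ⟨fun a ha => Eventually.of_forall fun α => ha.trans_le (by positivity),
    fun η hη => ?_⟩
  obtain ⟨C, hC⟩ := exists_one_sub_mul_norm_rpow_le (μ := μ) hp (div_pos hη (mul_pos two_pos hK))
  have hbound : ∀ᶠ α in l, ‖f α - f₀‖ ^ q ≤ (2 * ‖f₀‖ + 1) ^ q := by
    filter_upwards [hnorm.eventually_lt_const (lt_add_one ‖f₀‖)] with α hα
    exact Real.rpow_le_rpow (norm_nonneg _) (by linarith [norm_sub_le (f α) f₀]) hq.le
  have hrest : Tendsto (fun α => ‖f α‖ ^ q - ‖f₀‖ ^ q + C * ‖|f α - f₀| ⊓ |f₀|‖ ^ q) l (𝓝 0) := by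
    simpa [Real.zero_rpow hq.ne'] using
      ((hnorm.rpow_const (Or.inr hq.le)).sub_const (‖f₀‖ ^ q)).add
        ((hinf.rpow_const (Or.inr hq.le)).const_mul C)
  filter_upwards [hbound, hrest.eventually (gt_mem_nhds (half_pos hη))] with α hα hα'
  have key := hC (f α - f₀) f₀
  rw [sub_add_cancel] at key
  have hεK : η / (2 * K) * (‖f α - f₀‖ ^ q + ‖f₀‖ ^ q) ≤ η / 2 := by
    calc _ ≤ η / (2 * K) * K := by gcongr; linarith
      _ = η / 2 := by field_simp
  linarith

end MeasureTheory.Lp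

/-- **Brezis–Lieb lemma for nets in `Lᵖ`, `1 ≤ p < ∞`**: if a net in `Lᵖ(μ)`
uo-converges to `f` and the norms converge to `‖f‖`, then it converges to `f` in norm. -/
theorem brezis_lieb_nets_Lp {Ω : Type*} [MeasurableSpace Ω] (μ : Measure Ω)
    (p : ENNReal) [Fact (1 ≤ p)] (hp : p ≠ ⊤)
    {ι : Type} [Preorder ι] [IsDirected ι (· ≤ ·)] [Nonempty ι]
    (f : ι → Lp ℝ p μ) (f₀ : Lp ℝ p μ)
    (huo : UOConvNet f f₀)
    (hnorm : Tendsto (fun α => ‖f α‖) atTop (𝓝 ‖f₀‖)) :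
    Tendsto (fun α => ‖f α - f₀‖) atTop (𝓝 0) :=
  Lp.tendsto_norm_sub_of_tendsto_norm_abs_sub_inf hp
    ((huo |f₀| (abs_nonneg f₀)).tendsto_norm_zero (Lp.hasOrderContinuousNorm hp)) hnorm
end

section
/- In any vector lattice, if (wₙ) is a sequence of positive elements and, for each n, the element sₙ = Σ_{k≠n} wₙ ∧ wₖ exists (e.g., as a norm-convergent sum in a Banach lattice), then the sequence ωₙ := (wₙ - sₙ)⁺ is pairwise disjoint: ω_m ∧ ω_p = 0 for m ≠ p. -/
section LatticeOrderedGroup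

variable {α : Type*} [AddCommGroup α] [Lattice α] [IsOrderedAddMonoid α]

lemma posPart_inf_posPart (a b : α) : a⁺ ⊓ b⁺ = (a ⊓ b)⁺ := by
  let := AddCommGroup.toDistribLattice α
  exact (sup_inf_right a b 0).symm

lemma sub_inf_inf_sub_inf (a b : α) : (a - a ⊓ b) ⊓ (b - a ⊓ b) = 0 := by
  rw [← inf_sub, sub_self]

lemma posPart_sub_inf_inf_posPart_sub_inf (a b : α) :
    (a - a ⊓ b)⁺ ⊓ (b - b ⊓ a)⁺ = 0 := by
  rw [inf_comm b, posPart_inf_posPart, sub_inf_inf_sub_inf, posPart_zero]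

lemma posPart_sub_tsum_le_posPart_sub {ι : Type*} [TopologicalSpace α] [OrderClosedTopology α]
    {f : ι → α} (hf : ∀ i, 0 ≤ f i) (hsum : Summable f) (a : α) (i : ι) :
    (a - ∑' j, f j)⁺ ≤ (a - f i)⁺ :=
  posPart_mono <| sub_le_sub_left (hsum.le_tsum i fun j _ => hf j) a

end LatticeOrderedGroup

theorem disjointification_general {E : Type*} [NormedAddCommGroup E] [Lattice E] [HasSolidNorm E]
    [IsOrderedAddMonoid E]
    (w : ℕ → E) (hw : ∀ n, 0 ≤ w n)
    (hsum : ∀ n, Summable fun k : {k : ℕ // k ≠ n} => w n ⊓ w (k : ℕ))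
    (ω : ℕ → E)
    (hω : ∀ n, ω n = (w n - ∑' k : {k : ℕ // k ≠ n}, w n ⊓ w (k : ℕ)) ⊔ 0) :
    Pairwise fun m p => ω m ⊓ ω p = 0 := by
  have hω_le {a b : ℕ} (hab : a ≠ b) : ω a ≤ (w a - w a ⊓ w b)⁺ := by
    rw [hω a]
    exact posPart_sub_tsum_le_posPart_sub (fun k : {k : ℕ // k ≠ a} => le_inf (hw a) (hw k))
      (hsum a) (w a) ⟨b, hab.symm⟩
  have hω_nonneg (a : ℕ) : 0 ≤ ω a := hω a ▸ le_sup_right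
  intro m p hmp
  refine le_antisymm ?_ (le_inf (hω_nonneg m) (hω_nonneg p))
  calc ω m ⊓ ω p ≤ (w m - w m ⊓ w p)⁺ ⊓ (w p - w p ⊓ w m)⁺ :=
        inf_le_inf (hω_le hmp) (hω_le hmp.symm)
    _ = 0 := posPart_sub_inf_inf_posPart_sub_inf _ _

/-- Disjointification: if `(wₙ)` are positive elements of a Banach lattice and for each `n`
the sum `sₙ = ∑_{k ≠ n} wₙ ⊓ wₖ` converges in norm, then the elements
`ωₙ = (wₙ - sₙ)⁺` are pairwise disjoint. -/
theorem disjointification {E : Type*} [NormedAddCommGroup E] [Lattice E] [HasSolidNorm E]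
    [IsOrderedAddMonoid E] [CompleteSpace E]
    (w : ℕ → E) (hw : ∀ n, 0 ≤ w n)
    (hsum : ∀ n, Summable fun k : {k : ℕ // k ≠ n} => w n ⊓ w (k : ℕ))
    (ω : ℕ → E)
    (hω : ∀ n, ω n = (w n - ∑' k : {k : ℕ // k ≠ n}, w n ⊓ w (k : ℕ)) ⊔ 0) :
    Pairwise fun m p => ω m ⊓ ω p = 0 :=
  disjointification_general w hw hsum ω hω
end
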